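/- arXiv:2207.12247 — 5 statements merged into one kernel-verified Lean document; each statement's English description precedes it below -/
import Mathlib

section
/- For the Ising model on a finite graph G=(V,E) with ferromagnetic couplings J and no external field, for every A ⊆ V, the correlation ⟨σ_A⟩ equals (Σ_{n : ∂n = A} w(n)) / (Σ_{n : ∂n = ∅} w(n)), where the sums are over currents n ∈ ℕ₀^E. -/
open scoped Classical BigOperators

def spin {V : Type*} (σ : V → Bool) (u : V) : ℝ := if σ u then 1 else -1

def curDeg {V E : Type*} [Fintype E] [DecidableEq V] (ep : E → V × V)
    (n : E → ℕ) (u : V) : ℕ :=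
  ∑ e, n e * ((if (ep e).1 = u then 1 else 0) + (if (ep e).2 = u then 1 else 0))

/-- The source set `∂n` of a current: vertices with odd incident current. -/
def curSources {V E : Type*} [Fintype V] [Fintype E] [DecidableEq V]
    (ep : E → V × V) (n : E → ℕ) : Finset V :=
  Finset.univ.filter fun u => Odd (curDeg ep n u)

noncomputable def curWt {E : Type*} [Fintype E] (J : E → ℝ) (n : E → ℕ) : ℝ :=
  ∏ e, J e ^ n e / (Nat.factorial (n e) : ℝ)

/-!
Expanding every Boltzmann factor `exp (J e σ_u σ_v)` as a power series turns the partition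
function into a sum over currents `n`, the current contributing `w(n) ∏ᵤ σᵤ ^ deg_n(u)`.
Summing `σ_A ∏ᵤ σᵤ ^ deg_n(u)` over all spin configurations gives `2 ^ |V|` when every exponent
is even, i.e. when `∂n = A`, and `0` otherwise. So numerator and denominator are `2 ^ |V|` times
the two current sums.
-/

section PiSeries

variable {R κ : Type*} [NormedCommRing R] [CompleteSpace R]

theorem summable_norm_prod_and_tsum_eq_prod_tsum_fin {m : ℕ} (f : Fin m → κ → R)
    (hf : ∀ i, Summable fun k => ‖f i k‖) :
    (Summable fun n : Fin m → κ => ‖∏ i, f i (n i)‖) ∧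
      ∑' n : Fin m → κ, ∏ i, f i (n i) = ∏ i, ∑' k, f i k := by
  induction m with
  | zero => exact ⟨.of_finite, by simp⟩
  | succ m ih =>
    obtain ⟨hS, hT⟩ := ih (fun i => f i.succ) fun i => hf i.succ
    have h0 := hf 0
    have hcons : ∀ p : κ × (Fin m → κ),
        ∏ i, f i (Fin.consEquiv (fun _ => κ) p i) = f 0 p.1 * ∏ i : Fin m, f i.succ (p.2 i) :=
      fun p => by simp only [Fin.prod_univ_succ, Fin.consEquiv_apply, Fin.cons_zero, Fin.cons_succ]
    refine ⟨(Fin.consEquiv fun _ => κ).summable_iff.mp <|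
      (h0.mul_norm hS).congr fun p => by rw [Function.comp_apply, hcons], ?_⟩
    rw [← (Fin.consEquiv fun _ => κ).tsum_eq, Fin.prod_univ_succ, ← hT,
      tsum_mul_tsum_of_summable_norm h0 hS]
    exact tsum_congr hcons

theorem summable_norm_prod_and_tsum_eq_prod_tsum {ι : Type*} [Fintype ι] (f : ι → κ → R)
    (hf : ∀ i, Summable fun k => ‖f i k‖) :
    (Summable fun n : ι → κ => ‖∏ i, f i (n i)‖) ∧
      ∑' n : ι → κ, ∏ i, f i (n i) = ∏ i, ∑' k, f i k := by
  let e := Fintype.equivFin ι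
  obtain ⟨hS, hT⟩ :=
    summable_norm_prod_and_tsum_eq_prod_tsum_fin (fun j => f (e.symm j)) fun j => hf _
  have hcomp : ∀ g : Fin (Fintype.card ι) → κ,
      ∏ i, f i (e.symm.arrowCongr (.refl κ) g i) = ∏ j, f (e.symm j) (g j) := fun g => by
    rw [← e.symm.prod_comp]
    simp
  refine ⟨(e.symm.arrowCongr (.refl κ)).summable_iff.mp <|
    hS.congr fun g => by rw [Function.comp_apply, hcomp], ?_⟩
  rw [← (e.symm.arrowCongr (.refl κ)).tsum_eq, ← e.symm.prod_comp, ← hT]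
  exact tsum_congr hcomp

end PiSeries

theorem summable_norm_pow_div_factorial (x : ℝ) :
    Summable fun k : ℕ => ‖x ^ k / (k.factorial : ℝ)‖ :=
  (Real.summable_pow_div_factorial x).abs

section Currents

variable {V E : Type*} [Fintype E]

theorem summable_norm_curWt (J : E → ℝ) : Summable fun n : E → ℕ => ‖curWt J n‖ :=
  (summable_norm_prod_and_tsum_eq_prod_tsum _ fun e => summable_norm_pow_div_factorial (J e)).1

theorem exp_sum_eq_tsum_curWt (J : E → ℝ) : Real.exp (∑ e, J e) = ∑' n : E → ℕ, curWt J n := by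
  rw [Real.exp_sum]
  simp only [Real.exp_eq_exp_ℝ, NormedSpace.exp_eq_tsum_div, curWt]
  exact (summable_norm_prod_and_tsum_eq_prod_tsum _ fun e =>
    summable_norm_pow_div_factorial (J e)).2.symm

variable [Fintype V] [DecidableEq V]

theorem prod_pow_curDeg {M : Type*} [CommMonoid M] (ep : E → V × V) (n : E → ℕ) (x : V → M) :
    ∏ u, x u ^ curDeg ep n u = ∏ e, (x (ep e).1 * x (ep e).2) ^ n e := by
  simp only [curDeg, ← Finset.prod_pow_eq_pow_sum]
  rw [Finset.prod_comm]
  refine Finset.prod_congr rfl fun e _ => ?_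
  simp only [mul_comm (n e), pow_mul, pow_add, Finset.prod_pow, Finset.prod_mul_distrib,
    Finset.prod_pow_boole, Finset.mem_univ, if_true]

theorem curWt_mul_spin (ep : E → V × V) (J : E → ℝ) (σ : V → Bool) (n : E → ℕ) :
    curWt (fun e => J e * spin σ (ep e).1 * spin σ (ep e).2) n =
      curWt J n * ∏ u, spin σ u ^ curDeg ep n u := by
  rw [prod_pow_curDeg, curWt, curWt, ← Finset.prod_mul_distrib]
  refine Finset.prod_congr rfl fun e _ => ?_
  ring

theorem sum_prod_spin_pow (m : V → ℕ) :
    ∑ σ : V → Bool, ∏ u, spin σ u ^ m u = if ∀ u, Even (m u) then 2 ^ Fintype.card V else 0 := by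
  calc ∑ σ : V → Bool, ∏ u, spin σ u ^ m u
      = ∏ u, ∑ b : Bool, (if b then (1 : ℝ) else -1) ^ m u := by
        rw [Fintype.prod_sum fun (u : V) (b : Bool) => (if b then (1 : ℝ) else -1) ^ m u]
        rfl
    _ = ∏ u, (1 + (-1) ^ m u) := by simp
    _ = _ := by
      split_ifs with h
      · simp [(h _).neg_one_pow, one_add_one_eq_two]
      · obtain ⟨u, hu⟩ := not_forall.mp h
        exact Finset.prod_eq_zero (Finset.mem_univ u)
          (by simp [(Nat.not_even_iff_odd.mp hu).neg_one_pow])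

theorem forall_even_add_curDeg_iff (ep : E → V × V) (n : E → ℕ) (B : Finset V) :
    (∀ u, Even ((if u ∈ B then 1 else 0) + curDeg ep n u)) ↔ curSources ep n = B := by
  simp only [Finset.ext_iff, curSources, Finset.mem_filter, Finset.mem_univ, true_and]
  refine forall_congr' fun u => ?_
  split_ifs with hu <;> simp [hu, Nat.even_add, ← Nat.not_even_iff_odd]

theorem sum_prod_spin_mul_prod_spin_pow_curDeg (ep : E → V × V) (n : E → ℕ) (B : Finset V) :
    ∑ σ : V → Bool, (∏ u ∈ B, spin σ u) * ∏ u, spin σ u ^ curDeg ep n u =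
      if curSources ep n = B then 2 ^ Fintype.card V else 0 := by
  have hmerge : ∀ σ : V → Bool, (∏ u ∈ B, spin σ u) * ∏ u, spin σ u ^ curDeg ep n u =
      ∏ u, spin σ u ^ ((if u ∈ B then 1 else 0) + curDeg ep n u) := fun σ => by
    simp only [pow_add, pow_ite, pow_one, pow_zero, Finset.prod_mul_distrib, Fintype.prod_ite_mem]
  simp only [hmerge, sum_prod_spin_pow, forall_even_add_curDeg_iff]

theorem sum_prod_spin_mul_exp_eq_tsum_curWt (ep : E → V × V) (J : E → ℝ) (B : Finset V) :
    ∑ σ : V → Bool, (∏ u ∈ B, spin σ u) *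
        Real.exp (∑ e, J e * spin σ (ep e).1 * spin σ (ep e).2) =
      2 ^ Fintype.card V * ∑' n : {n : E → ℕ // curSources ep n = B}, curWt J n.1 := by
  calc _ = ∑ σ : V → Bool, ∑' n : E → ℕ, (∏ u ∈ B, spin σ u) *
          curWt (fun e => J e * spin σ (ep e).1 * spin σ (ep e).2) n := by
        simp only [exp_sum_eq_tsum_curWt, tsum_mul_left]
    _ = ∑' n : E → ℕ, ∑ σ : V → Bool, (∏ u ∈ B, spin σ u) *
          curWt (fun e => J e * spin σ (ep e).1 * spin σ (ep e).2) n :=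
        (Summable.tsum_finsetSum fun σ _ => (summable_norm_curWt _).of_norm.mul_left _).symm
    _ = ∑' n : E → ℕ,
          {n | curSources ep n = B}.indicator (fun n => 2 ^ Fintype.card V * curWt J n) n := by
        refine tsum_congr fun n => ?_
        simp only [curWt_mul_spin, mul_left_comm _ (curWt J n), ← Finset.mul_sum,
          sum_prod_spin_mul_prod_spin_pow_curDeg, Set.indicator_apply, Set.mem_ofPred_eq]
        split_ifs <;> ring
    _ = _ := by rw [← tsum_subtype, tsum_mul_left]; rfl

end Currents

theorem correlation_random_current_general {V E : Type*} [Fintype V] [DecidableEq V]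
    [Fintype E] (ep : E → V × V) (J : E → ℝ) (A : Finset V) :
    (∑ σ : V → Bool, (∏ u ∈ A, spin σ u) *
        Real.exp (∑ e, J e * spin σ (ep e).1 * spin σ (ep e).2)) /
      (∑ σ : V → Bool, Real.exp (∑ e, J e * spin σ (ep e).1 * spin σ (ep e).2))
    = (∑' n : {n : E → ℕ // curSources ep n = A}, curWt J n.1) /
      (∑' n : {n : E → ℕ // curSources ep n = ∅}, curWt J n.1) := by
  have hZ := sum_prod_spin_mul_exp_eq_tsum_curWt ep J ∅
  simp only [Finset.prod_empty, one_mul] at hZ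
  rw [sum_prod_spin_mul_exp_eq_tsum_curWt, hZ, mul_div_mul_left _ _ (by positivity)]

/-- Random current representation of correlation functions:
`⟨σ_A⟩ = (Σ_{∂n = A} w(n)) / (Σ_{∂n = ∅} w(n))`. -/
theorem correlation_random_current {V E : Type*} [Fintype V] [DecidableEq V]
    [Fintype E] (ep : E → V × V) (J : E → ℝ) (hferro : ∀ e, 0 ≤ J e) (A : Finset V) :
    (∑ σ : V → Bool, (∏ u ∈ A, spin σ u) *
        Real.exp (∑ e, J e * spin σ (ep e).1 * spin σ (ep e).2)) /
      (∑ σ : V → Bool, Real.exp (∑ e, J e * spin σ (ep e).1 * spin σ (ep e).2))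
    = (∑' n : {n : E → ℕ // curSources ep n = A}, curWt J n.1) /
      (∑' n : {n : E → ℕ // curSources ep n = ∅}, curWt J n.1) :=
  correlation_random_current_general ep J A
end

section
/- Reduction formula for Ursell functions: let σ_{j₁},…,σ_{j_{2k}} be random variables with j₁ = j₂ (i.e., σ_{j₁} = σ_{j₂}) where the common variable takes values in {-1,+1}, and k ≥ 2. Then u_{2k}(σ_{j₁},…,σ_{j_{2k}}) = -Σ_A u_{|A|}(σ_{j_A}) u_{2k-|A|}(σ_{j_{A^c}}), where the sum is over subsets A ⊆ {1,…,2k} with 1 ∈ A and 2 ∉ A, A^c is the complement, and σ_{j_A} denotes the tuple of variables indexed by A. -/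
open scoped Classical BigOperators
open MeasureTheory

def IsPartitionOf {α : Type*} (S : Finset α) (P : Finset (Finset α)) : Prop :=
  (∀ B ∈ P, B.Nonempty) ∧ (∀ B ∈ P, B ⊆ S) ∧
  (∀ B ∈ P, ∀ C ∈ P, B ≠ C → Disjoint B C) ∧ (∀ a ∈ S, ∃ B ∈ P, a ∈ B)

/-- The Ursell function (joint cumulant) of the subfamily of `f` indexed by `S`,
defined by the partition-sum formula. -/
noncomputable def ursellOn {Ω ι : Type*} [MeasurableSpace Ω] [Fintype ι]
    (μ : Measure Ω) (f : ι → Ω → ℝ) (S : Finset ι) : ℝ :=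
  ∑ P ∈ Finset.univ.filter (IsPartitionOf S),
    (-1 : ℝ) ^ (P.card - 1) * (Nat.factorial (P.card - 1) : ℝ) *
      ∏ B ∈ P, ∫ ω, ∏ i ∈ B, f i ω ∂μ

set_option linter.unusedSectionVars false
set_option linter.unusedVariables false
set_option maxHeartbeats 1000000

namespace UrsellAux


variable {ι : Type*} [DecidableEq ι]

/-- Coefficient in the Ursell partition sum. -/
noncomputable def cc (r : ℕ) : ℝ := (-1 : ℝ) ^ (r - 1) * (Nat.factorial (r - 1) : ℝ)

lemma block_unique {S : Finset ι} {P : Finset (Finset ι)} (hP : IsPartitionOf S P)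
    {B C : Finset ι} (hB : B ∈ P) (hC : C ∈ P) {x : ι} (hxB : x ∈ B) (hxC : x ∈ C) :
    B = C := by
  by_contra h
  exact (Finset.disjoint_left.mp (hP.2.2.1 B hB C hC h) hxB) hxC

lemma sup_eq {S : Finset ι} {P : Finset (Finset ι)} (hP : IsPartitionOf S P) :
    P.sup id = S := by
  apply Finset.Subset.antisymm
  · exact Finset.sup_le fun B hB => hP.2.1 B hB
  · intro x hx
    obtain ⟨B, hB, hxB⟩ := hP.2.2.2 x hx
    exact Finset.mem_sup.mpr ⟨B, hB, hxB⟩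

lemma nonempty_of_part {S : Finset ι} {P : Finset (Finset ι)} (hP : IsPartitionOf S P)
    (hS : S.Nonempty) : P.Nonempty := by
  obtain ⟨x, hx⟩ := hS
  obtain ⟨B, hB, -⟩ := hP.2.2.2 x hx
  exact ⟨B, hB⟩

lemma empty_not_mem {S : Finset ι} {P : Finset (Finset ι)} (hP : IsPartitionOf S P) :
    ∅ ∉ P := fun h => (hP.1 ∅ h).ne_empty rfl

lemma part_union {A B : Finset ι} {P Q : Finset (Finset ι)} (hd : Disjoint A B)
    (hP : IsPartitionOf A P) (hQ : IsPartitionOf B Q) :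
    IsPartitionOf (A ∪ B) (P ∪ Q) := by
  refine ⟨?_, ?_, ?_, ?_⟩
  · intro C hC
    rcases Finset.mem_union.mp hC with h | h
    exacts [hP.1 C h, hQ.1 C h]
  · intro C hC
    rcases Finset.mem_union.mp hC with h | h
    · exact (hP.2.1 C h).trans Finset.subset_union_left
    · exact (hQ.2.1 C h).trans Finset.subset_union_right
  · intro C hC D hD hne
    rcases Finset.mem_union.mp hC with h1 | h1 <;> rcases Finset.mem_union.mp hD with h2 | h2
    · exact hP.2.2.1 C h1 D h2 hne
    · exact hd.mono (hP.2.1 C h1) (hQ.2.1 D h2)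
    · exact (hd.mono (hP.2.1 D h2) (hQ.2.1 C h1)).symm
    · exact hQ.2.2.1 C h1 D h2 hne
  · intro x hx
    rcases Finset.mem_union.mp hx with h | h
    · obtain ⟨C, hC, hxC⟩ := hP.2.2.2 x h
      exact ⟨C, Finset.mem_union_left _ hC, hxC⟩
    · obtain ⟨C, hC, hxC⟩ := hQ.2.2.2 x h
      exact ⟨C, Finset.mem_union_right _ hC, hxC⟩

lemma parts_disjoint {A B : Finset ι} {P Q : Finset (Finset ι)} (hd : Disjoint A B)
    (hP : IsPartitionOf A P) (hQ : IsPartitionOf B Q) : Disjoint P Q := by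
  rw [Finset.disjoint_left]
  intro C hCP hCQ
  obtain ⟨x, hx⟩ := hP.1 C hCP
  exact Finset.disjoint_left.mp hd (hP.2.1 C hCP hx) (hQ.2.1 C hCQ hx)

lemma part_restrict {S : Finset ι} {Q T : Finset (Finset ι)} (hQ : IsPartitionOf S Q)
    (hT : T ⊆ Q) : IsPartitionOf (T.sup id) T := by
  refine ⟨fun B hB => hQ.1 B (hT hB), fun B hB => Finset.le_sup (f := id) hB,
    fun B hB C hC hne => hQ.2.2.1 B (hT hB) C (hT hC) hne, fun x hx => ?_⟩
  exact Finset.mem_sup.mp hx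

lemma part_sdiff {S : Finset ι} {Q T : Finset (Finset ι)} (hQ : IsPartitionOf S Q)
    (hT : T ⊆ Q) : IsPartitionOf (S \ T.sup id) (Q \ T) := by
  refine ⟨fun B hB => hQ.1 B (Finset.mem_sdiff.mp hB).1, ?_, ?_, ?_⟩
  · intro B hB
    obtain ⟨hBQ, hBT⟩ := Finset.mem_sdiff.mp hB
    intro x hx
    refine Finset.mem_sdiff.mpr ⟨hQ.2.1 B hBQ hx, fun hxs => ?_⟩
    obtain ⟨C, hCT, hxC⟩ := Finset.mem_sup.mp hxs
    exact Finset.disjoint_left.mp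
      (hQ.2.2.1 B hBQ C (hT hCT) (fun h => hBT (h ▸ hCT))) hx hxC
  · intro B hB C hC hne
    exact hQ.2.2.1 B (Finset.mem_sdiff.mp hB).1 C (Finset.mem_sdiff.mp hC).1 hne
  · intro x hx
    obtain ⟨hxS, hxsup⟩ := Finset.mem_sdiff.mp hx
    obtain ⟨B, hBQ, hxB⟩ := hQ.2.2.2 x hxS
    refine ⟨B, Finset.mem_sdiff.mpr ⟨hBQ, fun hBT => ?_⟩, hxB⟩
    exact hxsup (Finset.mem_sup.mpr ⟨B, hBT, hxB⟩)

lemma cc_succ_add (r : ℕ) (hr : 1 ≤ r) : cc (r + 1) + (r : ℝ) * cc r = 0 := by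
  obtain ⟨s, rfl⟩ := Nat.exists_eq_add_of_le hr
  simp only [cc, Nat.add_sub_cancel_left]
  have h1 : 1 + s + 1 - 1 = s + 1 := by omega
  rw [h1, Nat.factorial_succ, pow_succ]
  push_cast
  ring

lemma cc_binom (n : ℕ) :
    ∑ j ∈ Finset.range (n + 1), (n.choose j : ℝ) * (cc (j + 1) * cc (n + 1 - j)) =
      (-1 : ℝ) ^ n * (Nat.factorial (n + 1) : ℝ) := by
  have key : ∀ j ∈ Finset.range (n + 1),
      (n.choose j : ℝ) * (cc (j + 1) * cc (n + 1 - j)) =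
        (-1 : ℝ) ^ n * (Nat.factorial n : ℝ) := by
    intro j hj
    have hjn : j ≤ n := Nat.lt_succ_iff.mp (Finset.mem_range.mp hj)
    have h1 : j + 1 - 1 = j := by omega
    have h2 : n + 1 - j - 1 = n - j := by omega
    simp only [cc, h1, h2]
    have hfac : (n.choose j : ℝ) * (Nat.factorial j : ℝ) * (Nat.factorial (n - j) : ℝ)
        = (Nat.factorial n : ℝ) := by
      rw [← Nat.cast_mul, ← Nat.cast_mul, Nat.choose_mul_factorial_mul_factorial hjn]
    have hsign : (-1 : ℝ) ^ j * (-1 : ℝ) ^ (n - j) = (-1 : ℝ) ^ n := by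
      rw [← pow_add, Nat.add_sub_cancel' hjn]
    calc (n.choose j : ℝ) * ((-1 : ℝ) ^ j * (Nat.factorial j : ℝ) *
          ((-1 : ℝ) ^ (n - j) * (Nat.factorial (n - j) : ℝ)))
        = ((-1 : ℝ) ^ j * (-1 : ℝ) ^ (n - j)) *
            ((n.choose j : ℝ) * (Nat.factorial j : ℝ) * (Nat.factorial (n - j) : ℝ)) := by ring
      _ = (-1 : ℝ) ^ n * (Nat.factorial n : ℝ) := by rw [hfac, hsign]
  rw [Finset.sum_congr rfl key, Finset.sum_const, Finset.card_range, nsmul_eq_mul,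
    Nat.factorial_succ]
  push_cast
  ring


variable {ι : Type*} [DecidableEq ι]

noncomputable def blk (Q : Finset (Finset ι)) (x : ι) : Finset ι :=
  if h : ∃ B ∈ Q, x ∈ B then h.choose else ∅

lemma blk_spec {Q : Finset (Finset ι)} {x : ι} (h : ∃ B ∈ Q, x ∈ B) :
    blk Q x ∈ Q ∧ x ∈ blk Q x := by
  rw [blk, dif_pos h]; exact ⟨h.choose_spec.1, h.choose_spec.2⟩

lemma blk_eq {S : Finset ι} {Q : Finset (Finset ι)} (hQ : IsPartitionOf S Q) {B : Finset ι}
    (hB : B ∈ Q) {x : ι} (hx : x ∈ B) : blk Q x = B :=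
  block_unique hQ (blk_spec ⟨B, hB, hx⟩).1 hB (blk_spec ⟨B, hB, hx⟩).2 hx

variable [Fintype ι]

lemma same_sum_zero (m : Finset ι → ℝ) (a b : ι) (hab : a ≠ b)
    (hE : (({a, b} : Finset ι)ᶜ).Nonempty)
    (hm0 : m ∅ = 1)
    (hm : ∀ B : Finset ι, a ∉ B → b ∉ B → m (insert a (insert b B)) = m B) :
    ∑ Q ∈ (Finset.univ.filter (IsPartitionOf (Finset.univ : Finset ι))).filter
        (fun Q => ∃ B ∈ Q, a ∈ B ∧ b ∈ B), cc Q.card * ∏ B ∈ Q, m B = 0 := by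
  classical
  set E : Finset ι := ({a, b} : Finset ι)ᶜ with hEdef
  have haE : a ∉ E := by simp [hEdef]
  have hbE : b ∉ E := by simp [hEdef]
  have hmemE : ∀ x : ι, x ≠ a → x ≠ b → x ∈ E := by
    intro x hx1 hx2; simp [hEdef, hx1, hx2]
  set Φ : Finset (Finset ι) → Finset ι → Finset (Finset ι) :=
    fun R o => insert (insert a (insert b o)) (R.erase o) with hΦ
  have key : ∑ Q ∈ (Finset.univ.filter (IsPartitionOf (Finset.univ : Finset ι))).filter
        (fun Q => ∃ B ∈ Q, a ∈ B ∧ b ∈ B), cc Q.card * ∏ B ∈ Q, m B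
      = ∑ x ∈ (Finset.univ.filter (IsPartitionOf E)).sigma
          (fun R => insert (∅ : Finset ι) R),
          cc (Φ x.1 x.2).card * ∏ B ∈ Φ x.1 x.2, m B := by
    refine Finset.sum_nbij'
      (fun Q => ⟨Finset.erase (insert ((blk Q a) \ {a, b}) (Q.erase (blk Q a))) ∅,
        (blk Q a) \ {a, b}⟩)
      (fun x => Φ x.1 x.2) ?_ ?_ ?_ ?_ ?_
    · -- forward membership
      intro Q hQ
      simp only [Finset.mem_filter, Finset.mem_univ, true_and] at hQ
      obtain ⟨hQpart, B₀, hB₀Q, haB₀, hbB₀⟩ := hQ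
      have hblk : blk Q a = B₀ := blk_eq hQpart hB₀Q haB₀
      rw [hblk]
      set o : Finset ι := B₀ \ {a, b} with ho
      set R : Finset (Finset ι) := Finset.erase (insert o (Q.erase B₀)) ∅ with hR
      have hoE : o ⊆ E := by
        intro x hx
        rw [ho, Finset.mem_sdiff, Finset.mem_insert, Finset.mem_singleton] at hx
        exact hmemE x (fun h => hx.2 (Or.inl h)) (fun h => hx.2 (Or.inr h))
      have hQeE : ∀ C ∈ Q.erase B₀, C ⊆ E := by
        intro C hC x hx
        obtain ⟨hCne, hCQ⟩ := Finset.mem_erase.mp hC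
        refine hmemE x (fun h => ?_) (fun h => ?_)
        · exact hCne (block_unique hQpart hCQ hB₀Q (h ▸ hx) haB₀)
        · exact hCne (block_unique hQpart hCQ hB₀Q (h ▸ hx) hbB₀)
      have hmemR : ∀ C : Finset ι, C ∈ R ↔ C ≠ ∅ ∧ (C = o ∨ C ∈ Q.erase B₀) := by
        intro C; rw [hR, Finset.mem_erase, Finset.mem_insert]
      have hRpart : IsPartitionOf E R := by
        refine ⟨?_, ?_, ?_, ?_⟩
        · intro C hC
          exact Finset.nonempty_iff_ne_empty.mpr ((hmemR C).mp hC).1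
        · intro C hC
          rcases ((hmemR C).mp hC).2 with rfl | h
          · exact hoE
          · exact hQeE C h
        · intro C hC D hD hne
          rcases ((hmemR C).mp hC).2 with rfl | h1 <;>
            rcases ((hmemR D).mp hD).2 with rfl | h2
          · exact absurd rfl hne
          · refine Disjoint.mono_left (Finset.sdiff_subset) ?_
            exact hQpart.2.2.1 B₀ hB₀Q D (Finset.mem_erase.mp h2).2
              (fun h => (Finset.mem_erase.mp h2).1 h.symm)
          · refine Disjoint.mono_right (Finset.sdiff_subset) ?_
            exact hQpart.2.2.1 C (Finset.mem_erase.mp h1).2 B₀ hB₀Q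
              (Finset.mem_erase.mp h1).1
          · exact hQpart.2.2.1 C (Finset.mem_erase.mp h1).2 D (Finset.mem_erase.mp h2).2 hne
        · intro x hx
          obtain ⟨B, hBQ, hxB⟩ := hQpart.2.2.2 x (Finset.mem_univ x)
          by_cases hB : B = B₀
          · subst hB
            have hxo : x ∈ o := by
              rw [ho, Finset.mem_sdiff]
              refine ⟨hxB, fun h => ?_⟩
              rcases Finset.mem_insert.mp h with rfl | h
              · exact haE hx
              · exact hbE (Finset.mem_singleton.mp h ▸ hx)
            exact ⟨o, (hmemR o).mpr ⟨Finset.ne_empty_of_mem hxo, Or.inl rfl⟩, hxo⟩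
          · exact ⟨B, (hmemR B).mpr ⟨(hQpart.1 B hBQ).ne_empty,
              Or.inr (Finset.mem_erase.mpr ⟨hB, hBQ⟩)⟩, hxB⟩
      have hoR : o ∈ insert (∅ : Finset ι) R := by
        by_cases ho0 : o = ∅
        · rw [ho0]; exact Finset.mem_insert_self _ _
        · exact Finset.mem_insert.mpr (Or.inr ((hmemR o).mpr ⟨ho0, Or.inl rfl⟩))
      exact Finset.mem_sigma.mpr ⟨Finset.mem_filter.mpr ⟨Finset.mem_univ _, hRpart⟩, hoR⟩
    · -- backward membership
      rintro ⟨R, o⟩ hx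
      obtain ⟨hR, ho⟩ := Finset.mem_sigma.mp hx
      have hRpart : IsPartitionOf E R := (Finset.mem_filter.mp hR).2
      have hao : a ∉ o := by
        rcases Finset.mem_insert.mp ho with rfl | h
        · exact Finset.notMem_empty a
        · exact fun hc => haE (hRpart.2.1 o h hc)
      have hbo : b ∉ o := by
        rcases Finset.mem_insert.mp ho with rfl | h
        · exact Finset.notMem_empty b
        · exact fun hc => hbE (hRpart.2.1 o h hc)
      set B' : Finset ι := insert a (insert b o) with hB'
      have hB'R : ∀ C ∈ R.erase o, Disjoint B' C := by
        intro C hC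
        obtain ⟨hCo, hCR⟩ := Finset.mem_erase.mp hC
        rw [Finset.disjoint_left]
        intro x hxB' hxC
        rcases Finset.mem_insert.mp hxB' with rfl | h
        · exact haE (hRpart.2.1 C hCR hxC)
        · rcases Finset.mem_insert.mp h with rfl | h
          · exact hbE (hRpart.2.1 C hCR hxC)
          · rcases Finset.mem_insert.mp ho with rfl | hoR
            · exact Finset.notMem_empty x h
            · exact Finset.disjoint_left.mp
                (hRpart.2.2.1 o hoR C hCR (fun hh => hCo hh.symm)) h hxC
      have hB'notmem : B' ∉ R.erase o := by
        intro h
        exact haE (hRpart.2.1 B' (Finset.mem_erase.mp h).2 (Finset.mem_insert_self _ _))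
      have hpart : IsPartitionOf (Finset.univ : Finset ι) (Φ R o) := by
        refine ⟨?_, fun C _ => Finset.subset_univ C, ?_, ?_⟩
        · intro C hC
          rcases Finset.mem_insert.mp hC with rfl | h
          · exact ⟨a, Finset.mem_insert_self _ _⟩
          · exact hRpart.1 C (Finset.mem_erase.mp h).2
        · intro C hC D hD hne
          rcases Finset.mem_insert.mp hC with rfl | h1 <;>
            rcases Finset.mem_insert.mp hD with rfl | h2
          · exact absurd rfl hne
          · exact hB'R D h2
          · exact (hB'R C h1).symm
          · exact hRpart.2.2.1 C (Finset.mem_erase.mp h1).2 D (Finset.mem_erase.mp h2).2 hne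
        · intro x _
          by_cases hxa : x = a
          · exact ⟨B', Finset.mem_insert_self _ _, hxa ▸ Finset.mem_insert_self _ _⟩
          by_cases hxb : x = b
          · exact ⟨B', Finset.mem_insert_self _ _,
              hxb ▸ Finset.mem_insert.mpr (Or.inr (Finset.mem_insert_self _ _))⟩
          obtain ⟨C, hCR, hxC⟩ := hRpart.2.2.2 x (hmemE x hxa hxb)
          by_cases hCo : C = o
          · exact ⟨B', Finset.mem_insert_self _ _,
              Finset.mem_insert.mpr (Or.inr (Finset.mem_insert.mpr (Or.inr (hCo ▸ hxC))))⟩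
          · exact ⟨C, Finset.mem_insert.mpr (Or.inr (Finset.mem_erase.mpr ⟨hCo, hCR⟩)), hxC⟩
      refine Finset.mem_filter.mpr ⟨Finset.mem_filter.mpr ⟨Finset.mem_univ _, hpart⟩, ?_⟩
      exact ⟨B', Finset.mem_insert_self _ _, Finset.mem_insert_self _ _,
        Finset.mem_insert.mpr (Or.inr (Finset.mem_insert_self _ _))⟩
    · -- left inverse : Φ (i Q) = Q
      intro Q hQ
      simp only [Finset.mem_filter, Finset.mem_univ, true_and] at hQ
      obtain ⟨hQpart, B₀, hB₀Q, haB₀, hbB₀⟩ := hQ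
      have hblk : blk Q a = B₀ := blk_eq hQpart hB₀Q haB₀
      simp only [hblk]
      set o : Finset ι := B₀ \ {a, b} with ho
      have hins : insert a (insert b o) = B₀ := by
        ext x
        simp only [Finset.mem_insert, ho, Finset.mem_sdiff, Finset.mem_singleton]
        constructor
        · rintro (rfl | rfl | ⟨h, -⟩)
          exacts [haB₀, hbB₀, h]
        · intro hx
          by_cases h1 : x = a
          · exact Or.inl h1
          by_cases h2 : x = b
          · exact Or.inr (Or.inl h2)
          · exact Or.inr (Or.inr ⟨hx, by simp [h1, h2]⟩)
      have honot : o ∉ Q.erase B₀ := by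
        intro h
        obtain ⟨hne, hoQ⟩ := Finset.mem_erase.mp h
        obtain ⟨x, hx⟩ := hQpart.1 o hoQ
        exact Finset.disjoint_left.mp (hQpart.2.2.1 o hoQ B₀ hB₀Q hne) hx
          (Finset.mem_sdiff.mp (ho ▸ hx)).1
      have hQe0 : (∅ : Finset ι) ∉ Q.erase B₀ :=
        fun h => empty_not_mem hQpart (Finset.mem_erase.mp h).2
      have herase : (Finset.erase (insert o (Q.erase B₀)) ∅).erase o = Q.erase B₀ := by
        rw [Finset.erase_right_comm, Finset.erase_insert honot,
          Finset.erase_eq_of_notMem hQe0]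
      show insert (insert a (insert b o)) _ = Q
      rw [hins, herase, Finset.insert_erase hB₀Q]
    · -- right inverse : i (Φ R o) = ⟨R, o⟩
      rintro ⟨R, o⟩ hx
      obtain ⟨hR, ho⟩ := Finset.mem_sigma.mp hx
      have hRpart : IsPartitionOf E R := (Finset.mem_filter.mp hR).2
      have hao : a ∉ o := by
        rcases Finset.mem_insert.mp ho with rfl | h
        · exact Finset.notMem_empty a
        · exact fun hc => haE (hRpart.2.1 o h hc)
      have hbo : b ∉ o := by
        rcases Finset.mem_insert.mp ho with rfl | h
        · exact Finset.notMem_empty b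
        · exact fun hc => hbE (hRpart.2.1 o h hc)
      set B' : Finset ι := insert a (insert b o) with hB'
      have hB'notmem : B' ∉ R.erase o := by
        intro h
        exact haE (hRpart.2.1 B' (Finset.mem_erase.mp h).2 (Finset.mem_insert_self _ _))
      -- Φ R o is a partition of univ (re-derive needed pieces)
      have hB'mem : B' ∈ Φ R o := Finset.mem_insert_self _ _
      have huniq : ∀ C ∈ Φ R o, a ∈ C → C = B' := by
        intro C hC haC
        rcases Finset.mem_insert.mp hC with rfl | h
        · rfl
        · exact absurd (hRpart.2.1 C (Finset.mem_erase.mp h).2 haC) haE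
      have hblk : blk (Φ R o) a = B' := by
        have hex : ∃ B ∈ Φ R o, a ∈ B := ⟨B', hB'mem, Finset.mem_insert_self _ _⟩
        obtain ⟨h1, h2⟩ := blk_spec hex
        exact huniq _ h1 h2
      have hsd : B' \ {a, b} = o := by
        ext x
        simp only [Finset.mem_sdiff, hB', Finset.mem_insert, Finset.mem_singleton]
        constructor
        · rintro ⟨(rfl | rfl | h), hnot⟩
          · exact absurd (Or.inl rfl) hnot
          · exact absurd (Or.inr rfl) hnot
          · exact h
        · intro hxo
          refine ⟨Or.inr (Or.inr hxo), ?_⟩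
          rintro (rfl | rfl)
          exacts [hao hxo, hbo hxo]
      have hΦerase : (Φ R o).erase B' = R.erase o := by
        rw [hΦ]
        exact Finset.erase_insert hB'notmem
      have hRrec : Finset.erase (insert o ((Φ R o).erase B')) ∅ = R := by
        rw [hΦerase]
        rcases Finset.mem_insert.mp ho with rfl | hoR
        · rw [Finset.erase_eq_of_notMem (empty_not_mem hRpart),
            Finset.erase_insert (empty_not_mem hRpart)]
        · rw [Finset.insert_erase hoR,
            Finset.erase_eq_of_notMem (empty_not_mem hRpart)]
      simp only [hblk, hsd, hRrec]
    · -- values agree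
      intro Q hQ
      simp only [Finset.mem_filter, Finset.mem_univ, true_and] at hQ
      obtain ⟨hQpart, B₀, hB₀Q, haB₀, hbB₀⟩ := hQ
      have hblk : blk Q a = B₀ := blk_eq hQpart hB₀Q haB₀
      have hins : insert a (insert b (B₀ \ {a, b})) = B₀ := by
        ext x
        simp only [Finset.mem_insert, Finset.mem_sdiff, Finset.mem_singleton]
        constructor
        · rintro (rfl | rfl | ⟨h, -⟩)
          exacts [haB₀, hbB₀, h]
        · intro hx
          by_cases h1 : x = a
          · exact Or.inl h1
          by_cases h2 : x = b
          · exact Or.inr (Or.inl h2)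
          · exact Or.inr (Or.inr ⟨hx, by simp [h1, h2]⟩)
      have honot : B₀ \ {a, b} ∉ Q.erase B₀ := by
        intro h
        obtain ⟨hne, hoQ⟩ := Finset.mem_erase.mp h
        obtain ⟨x, hx⟩ := hQpart.1 _ hoQ
        exact Finset.disjoint_left.mp (hQpart.2.2.1 _ hoQ B₀ hB₀Q hne) hx
          (Finset.mem_sdiff.mp hx).1
      have hQe0 : (∅ : Finset ι) ∉ Q.erase B₀ :=
        fun h => empty_not_mem hQpart (Finset.mem_erase.mp h).2
      have herase : (Finset.erase (insert (B₀ \ {a, b}) (Q.erase B₀)) ∅).erase (B₀ \ {a, b})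
          = Q.erase B₀ := by
        rw [Finset.erase_right_comm, Finset.erase_insert honot,
          Finset.erase_eq_of_notMem hQe0]
      have : Φ (Finset.erase (insert ((blk Q a) \ {a, b}) (Q.erase (blk Q a))) ∅)
          ((blk Q a) \ {a, b}) = Q := by
        simp only [hblk, hΦ]
        rw [hins, herase, Finset.insert_erase hB₀Q]
      rw [this]
  rw [key, Finset.sum_sigma]
  apply Finset.sum_eq_zero
  intro R hR
  have hRpart : IsPartitionOf E R := (Finset.mem_filter.mp hR).2
  have hRne : R.Nonempty := by
    obtain ⟨x, hx⟩ := hE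
    obtain ⟨B, hB, -⟩ := hRpart.2.2.2 x hx
    exact ⟨B, hB⟩
  have hRcard : 1 ≤ R.card := Finset.card_pos.mpr hRne
  have h0R : (∅ : Finset ι) ∉ R := empty_not_mem hRpart
  rw [Finset.sum_insert h0R]
  -- the o = ∅ term
  have hterm0 : cc (Φ R ∅).card * ∏ B ∈ Φ R ∅, m B
      = cc (R.card + 1) * ∏ B ∈ R, m B := by
    have h1 : R.erase ∅ = R := Finset.erase_eq_of_notMem h0R
    have hBnot : insert a (insert b ∅) ∉ R := by
      intro h
      exact haE (hRpart.2.1 _ h (Finset.mem_insert_self _ _))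
    have hcard : (Φ R ∅).card = R.card + 1 := by
      rw [hΦ]; simp only [h1]
      exact Finset.card_insert_of_notMem hBnot
    have hprod : ∏ B ∈ Φ R ∅, m B = ∏ B ∈ R, m B := by
      rw [hΦ]; simp only [h1]
      rw [Finset.prod_insert hBnot,
        hm ∅ (Finset.notMem_empty a) (Finset.notMem_empty b), hm0, one_mul]
    rw [hcard, hprod]
  rw [hterm0]
  -- the o ∈ R terms
  have hterms : ∀ o ∈ R, cc (Φ R o).card * ∏ B ∈ Φ R o, m B
      = cc R.card * ∏ B ∈ R, m B := by
    intro o hoR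
    have hao : a ∉ o := fun hc => haE (hRpart.2.1 o hoR hc)
    have hbo : b ∉ o := fun hc => hbE (hRpart.2.1 o hoR hc)
    have hBnot : insert a (insert b o) ∉ R.erase o := by
      intro h
      exact haE (hRpart.2.1 _ (Finset.mem_erase.mp h).2 (Finset.mem_insert_self _ _))
    have hcard : (Φ R o).card = R.card := by
      rw [hΦ]
      simp only []
      rw [Finset.card_insert_of_notMem hBnot, Finset.card_erase_of_mem hoR]
      omega
    have hprod : ∏ B ∈ Φ R o, m B = ∏ B ∈ R, m B := by
      rw [hΦ]
      simp only []
      rw [Finset.prod_insert hBnot, hm o hao hbo, Finset.mul_prod_erase R m hoR]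
    rw [hcard, hprod]
  rw [Finset.sum_congr rfl hterms, Finset.sum_const, nsmul_eq_mul]
  have h := cc_succ_add R.card hRcard
  calc cc (R.card + 1) * ∏ B ∈ R, m B + (R.card : ℝ) * (cc R.card * ∏ B ∈ R, m B)
      = (cc (R.card + 1) + (R.card : ℝ) * cc R.card) * ∏ B ∈ R, m B := by ring
    _ = 0 := by rw [h, zero_mul]


variable {ι : Type*} [DecidableEq ι]

variable [Fintype ι]

/-- inner sum over `T` for a fixed separated partition `Q`. -/
lemma inner_sum (m : Finset ι → ℝ) (a b : ι) (hab : a ≠ b)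
    {Q : Finset (Finset ι)} (hQpart : IsPartitionOf (Finset.univ : Finset ι) Q)
    (hsep : ¬ ∃ B ∈ Q, a ∈ B ∧ b ∈ B) :
    ∑ T ∈ Q.powerset.filter (fun T => a ∈ T.sup id ∧ b ∉ T.sup id),
      (cc T.card * ∏ B ∈ T, m B) * (cc (Q \ T).card * ∏ B ∈ Q \ T, m B)
    = -(cc Q.card * ∏ B ∈ Q, m B) := by
  classical
  obtain ⟨hBaQ, haBa⟩ := blk_spec (Q := Q) (x := a) (hQpart.2.2.2 a (Finset.mem_univ a))
  obtain ⟨hBbQ, hbBb⟩ := blk_spec (Q := Q) (x := b) (hQpart.2.2.2 b (Finset.mem_univ b))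
  set Ba := blk Q a
  set Bb := blk Q b
  have hne : Ba ≠ Bb := fun h => hsep ⟨Ba, hBaQ, haBa, h ▸ hbBb⟩
  -- rewrite the filter condition
  have hcond : ∀ T ∈ Q.powerset,
      ((a ∈ T.sup id ∧ b ∉ T.sup id) ↔ (Ba ∈ T ∧ Bb ∉ T)) := by
    intro T hT
    have hTQ : T ⊆ Q := Finset.mem_powerset.mp hT
    have h1 : a ∈ T.sup id ↔ Ba ∈ T := by
      constructor
      · intro h
        obtain ⟨C, hCT, haC⟩ := Finset.mem_sup.mp h
        rwa [block_unique hQpart (hTQ hCT) hBaQ haC haBa] at hCT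
      · intro h; exact Finset.mem_sup.mpr ⟨Ba, h, haBa⟩
    have h2 : b ∈ T.sup id ↔ Bb ∈ T := by
      constructor
      · intro h
        obtain ⟨C, hCT, hbC⟩ := Finset.mem_sup.mp h
        rwa [block_unique hQpart (hTQ hCT) hBbQ hbC hbBb] at hCT
      · intro h; exact Finset.mem_sup.mpr ⟨Bb, h, hbBb⟩
    rw [h1, h2]
  rw [Finset.filter_congr hcond]
  -- reindex by U = T.erase Ba
  set Q' : Finset (Finset ι) := (Q.erase Ba).erase Bb with hQ'
  have hBanotQ' : Ba ∉ Q' := by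
    intro h
    exact (Finset.mem_erase.mp (Finset.mem_erase.mp h).2).1 rfl
  have hBbnotQ' : Bb ∉ Q' := fun h => (Finset.mem_erase.mp h).1 rfl
  have hkey : ∑ T ∈ Q.powerset.filter (fun T => Ba ∈ T ∧ Bb ∉ T),
      (cc T.card * ∏ B ∈ T, m B) * (cc (Q \ T).card * ∏ B ∈ Q \ T, m B)
      = ∑ U ∈ Q'.powerset,
        (cc (insert Ba U).card * ∏ B ∈ insert Ba U, m B) *
          (cc (Q \ insert Ba U).card * ∏ B ∈ Q \ insert Ba U, m B) := by
    refine Finset.sum_nbij' (fun T => T.erase Ba) (fun U => insert Ba U) ?_ ?_ ?_ ?_ ?_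
    · intro T hT
      simp only [Finset.mem_filter, Finset.mem_powerset] at hT
      obtain ⟨hTQ, hBaT, hBbT⟩ := hT
      refine Finset.mem_powerset.mpr ?_
      intro C hC
      obtain ⟨hCBa, hCT⟩ := Finset.mem_erase.mp hC
      exact Finset.mem_erase.mpr ⟨fun h => hBbT (h ▸ hCT),
        Finset.mem_erase.mpr ⟨hCBa, hTQ hCT⟩⟩
    · intro U hU
      have hUQ' : U ⊆ Q' := Finset.mem_powerset.mp hU
      refine Finset.mem_filter.mpr ⟨Finset.mem_powerset.mpr ?_,
        Finset.mem_insert_self _ _, ?_⟩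
      · intro C hC
        rcases Finset.mem_insert.mp hC with rfl | h
        · exact hBaQ
        · exact (Finset.mem_erase.mp (Finset.mem_erase.mp (hUQ' h)).2).2
      · intro h
        rcases Finset.mem_insert.mp h with h | h
        · exact hne h.symm
        · exact hBbnotQ' (hUQ' h)
    · intro T hT
      simp only [Finset.mem_filter] at hT
      exact Finset.insert_erase hT.2.1
    · intro U hU
      exact Finset.erase_insert (fun h => hBanotQ' (Finset.mem_powerset.mp hU h))
    · intro T hT
      simp only [Finset.mem_filter] at hT
      rw [Finset.insert_erase hT.2.1]
  rw [hkey]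
  -- compute each term
  have hBbQa : Bb ∈ Q.erase Ba := Finset.mem_erase.mpr ⟨hne.symm, hBbQ⟩
  have hQ'card : Q'.card = Q.card - 2 := by
    rw [hQ', Finset.card_erase_of_mem hBbQa, Finset.card_erase_of_mem hBaQ]
    omega
  have hn2 : 2 ≤ Q.card := by
    have := Finset.card_le_card (show {Ba, Bb} ⊆ Q by
      intro C hC
      rcases Finset.mem_insert.mp hC with rfl | h
      · exact hBaQ
      · exact (Finset.mem_singleton.mp h) ▸ hBbQ)
    rwa [Finset.card_insert_of_notMem (by simpa using hne), Finset.card_singleton] at this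
  obtain ⟨M, hM⟩ : ∃ M, Q.card = M + 2 := ⟨Q.card - 2, by omega⟩
  have hterm : ∀ U ∈ Q'.powerset,
      (cc (insert Ba U).card * ∏ B ∈ insert Ba U, m B) *
        (cc (Q \ insert Ba U).card * ∏ B ∈ Q \ insert Ba U, m B)
      = (cc (U.card + 1) * cc (M + 1 - U.card)) * ∏ B ∈ Q, m B := by
    intro U hU
    have hUQ' : U ⊆ Q' := Finset.mem_powerset.mp hU
    have hBaU : Ba ∉ U := fun h => hBanotQ' (hUQ' h)
    have hTQ : insert Ba U ⊆ Q := by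
      intro C hC
      rcases Finset.mem_insert.mp hC with rfl | h
      · exact hBaQ
      · exact (Finset.mem_erase.mp (Finset.mem_erase.mp (hUQ' h)).2).2
    have hUcard : U.card ≤ M := by
      have := Finset.card_le_card hUQ'
      omega
    have hc1 : (insert Ba U).card = U.card + 1 := Finset.card_insert_of_notMem hBaU
    have hc2 : (Q \ insert Ba U).card = M + 1 - U.card := by
      rw [Finset.card_sdiff_of_subset hTQ, hc1]
      omega
    have hp : (∏ B ∈ Q \ insert Ba U, m B) * ∏ B ∈ insert Ba U, m B = ∏ B ∈ Q, m B :=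
      Finset.prod_sdiff hTQ
    rw [hc1, hc2, ← hp]
    ring
  rw [Finset.sum_congr rfl hterm, ← Finset.sum_mul, Finset.sum_powerset]
  have hcardsum : ∀ j ∈ Finset.range (Q'.card + 1),
      ∑ U ∈ Finset.powersetCard j Q', cc (U.card + 1) * cc (M + 1 - U.card)
        = (M.choose j : ℝ) * (cc (j + 1) * cc (M + 1 - j)) := by
    intro j hj
    have : ∀ U ∈ Finset.powersetCard j Q', cc (U.card + 1) * cc (M + 1 - U.card)
        = cc (j + 1) * cc (M + 1 - j) := by
      intro U hU
      rw [(Finset.mem_powersetCard.mp hU).2]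
    rw [Finset.sum_congr rfl this, Finset.sum_const, Finset.card_powersetCard,
      nsmul_eq_mul, hQ'card, hM]
    norm_num
  have hQ'c : Q'.card = M := by omega
  rw [Finset.sum_congr rfl hcardsum, hQ'c, cc_binom M]
  have hccQ : cc Q.card = (-1 : ℝ) ^ (M + 1) * (Nat.factorial (M + 1) : ℝ) := by
    rw [hM]; simp [cc]
  rw [hccQ, pow_succ]
  ring


variable {ι : Type*} [DecidableEq ι]

variable [Fintype ι]

lemma sep_sum (m : Finset ι → ℝ) (a b : ι) (hab : a ≠ b) :
    ∑ A ∈ Finset.univ.powerset.filter (fun A : Finset ι => a ∈ A ∧ b ∉ A),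
      (∑ P ∈ Finset.univ.filter (IsPartitionOf A), cc P.card * ∏ B ∈ P, m B) *
      (∑ P ∈ Finset.univ.filter (IsPartitionOf Aᶜ), cc P.card * ∏ B ∈ P, m B)
    = - ∑ Q ∈ (Finset.univ.filter (IsPartitionOf (Finset.univ : Finset ι))).filter
        (fun Q => ¬ ∃ B ∈ Q, a ∈ B ∧ b ∈ B), cc Q.card * ∏ B ∈ Q, m B := by
  classical
  have expand : ∀ A : Finset ι,
      (∑ P ∈ Finset.univ.filter (IsPartitionOf A), cc P.card * ∏ B ∈ P, m B)
      * (∑ P ∈ Finset.univ.filter (IsPartitionOf Aᶜ), cc P.card * ∏ B ∈ P, m B)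
      = ∑ p ∈ (Finset.univ.filter (IsPartitionOf A)) ×ˢ
          (Finset.univ.filter (IsPartitionOf Aᶜ)),
          (cc p.1.card * ∏ B ∈ p.1, m B) * (cc p.2.card * ∏ B ∈ p.2, m B) := by
    intro A
    rw [Finset.sum_mul_sum, ← Finset.sum_product']
  rw [Finset.sum_congr rfl (fun A _ => expand A), Finset.sum_sigma']
  have step2 : ∑ x ∈ (Finset.univ.powerset.filter
        (fun A : Finset ι => a ∈ A ∧ b ∉ A)).sigma
        (fun A => (Finset.univ.filter (IsPartitionOf A)) ×ˢ
          (Finset.univ.filter (IsPartitionOf Aᶜ))),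
        (cc x.2.1.card * ∏ B ∈ x.2.1, m B) * (cc x.2.2.card * ∏ B ∈ x.2.2, m B)
      = ∑ y ∈ ((Finset.univ.filter (IsPartitionOf (Finset.univ : Finset ι))).filter
          (fun Q => ¬ ∃ B ∈ Q, a ∈ B ∧ b ∈ B)).sigma
          (fun Q => Q.powerset.filter (fun T => a ∈ T.sup id ∧ b ∉ T.sup id)),
        (cc y.2.card * ∏ B ∈ y.2, m B) *
          (cc (y.1 \ y.2).card * ∏ B ∈ y.1 \ y.2, m B) := by
    refine Finset.sum_nbij' (fun x => ⟨x.2.1 ∪ x.2.2, x.2.1⟩)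
      (fun y => ⟨y.2.sup id, (y.2, y.1 \ y.2)⟩) ?_ ?_ ?_ ?_ ?_
    · rintro ⟨A, P₁, P₂⟩ hx
      obtain ⟨hA, hP⟩ := Finset.mem_sigma.mp hx
      obtain ⟨-, haA, hbA⟩ := Finset.mem_filter.mp hA
      obtain ⟨hP₁, hP₂⟩ := Finset.mem_product.mp hP
      have h1 : IsPartitionOf A P₁ := (Finset.mem_filter.mp hP₁).2
      have h2 : IsPartitionOf Aᶜ P₂ := (Finset.mem_filter.mp hP₂).2
      have hu : IsPartitionOf (Finset.univ : Finset ι) (P₁ ∪ P₂) := by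
        have := part_union disjoint_compl_right h1 h2
        rwa [Finset.union_compl] at this
      refine Finset.mem_sigma.mpr ⟨Finset.mem_filter.mpr
        ⟨Finset.mem_filter.mpr ⟨Finset.mem_univ _, hu⟩, ?_⟩, ?_⟩
      · rintro ⟨B, hB, haB, hbB⟩
        rcases Finset.mem_union.mp hB with h | h
        · exact hbA (h1.2.1 B h hbB)
        · exact (Finset.mem_compl.mp (h2.2.1 B h haB)) haA
      · refine Finset.mem_filter.mpr ⟨Finset.mem_powerset.mpr
          Finset.subset_union_left, ?_, ?_⟩
        · rw [sup_eq h1]; exact haA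
        · rw [sup_eq h1]; exact hbA
    · rintro ⟨Q, T⟩ hy
      obtain ⟨hQ, hT⟩ := Finset.mem_sigma.mp hy
      have hQpart : IsPartitionOf (Finset.univ : Finset ι) Q :=
        (Finset.mem_filter.mp (Finset.mem_filter.mp hQ).1).2
      obtain ⟨hTQ, haT, hbT⟩ := Finset.mem_filter.mp hT
      have hTQ' : T ⊆ Q := Finset.mem_powerset.mp hTQ
      refine Finset.mem_sigma.mpr ⟨Finset.mem_filter.mpr
        ⟨Finset.mem_powerset.mpr (Finset.subset_univ _), haT, hbT⟩, ?_⟩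
      refine Finset.mem_product.mpr ⟨Finset.mem_filter.mpr
        ⟨Finset.mem_univ _, part_restrict hQpart hTQ'⟩,
        Finset.mem_filter.mpr ⟨Finset.mem_univ _, ?_⟩⟩
      have := part_sdiff hQpart hTQ'
      rwa [← Finset.compl_eq_univ_sdiff] at this
    · rintro ⟨A, P₁, P₂⟩ hx
      obtain ⟨hA, hP⟩ := Finset.mem_sigma.mp hx
      obtain ⟨hP₁, hP₂⟩ := Finset.mem_product.mp hP
      have h1 : IsPartitionOf A P₁ := (Finset.mem_filter.mp hP₁).2
      have h2 : IsPartitionOf Aᶜ P₂ := (Finset.mem_filter.mp hP₂).2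
      have hd : Disjoint P₁ P₂ := parts_disjoint disjoint_compl_right h1 h2
      have e1 : P₁.sup id = A := sup_eq h1
      subst e1
      dsimp only
      rw [Finset.union_sdiff_cancel_left hd]
    · rintro ⟨Q, T⟩ hy
      obtain ⟨hQ, hT⟩ := Finset.mem_sigma.mp hy
      obtain ⟨hTQ, -, -⟩ := Finset.mem_filter.mp hT
      have hTQ' : T ⊆ Q := Finset.mem_powerset.mp hTQ
      dsimp only
      rw [Finset.union_sdiff_of_subset hTQ']
    · rintro ⟨A, P₁, P₂⟩ hx
      obtain ⟨hA, hP⟩ := Finset.mem_sigma.mp hx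
      obtain ⟨hP₁, hP₂⟩ := Finset.mem_product.mp hP
      have h1 : IsPartitionOf A P₁ := (Finset.mem_filter.mp hP₁).2
      have h2 : IsPartitionOf Aᶜ P₂ := (Finset.mem_filter.mp hP₂).2
      have hd : Disjoint P₁ P₂ := parts_disjoint disjoint_compl_right h1 h2
      simp only [Finset.union_sdiff_cancel_left hd]
  rw [step2, Finset.sum_sigma]
  rw [← Finset.sum_neg_distrib]
  refine Finset.sum_congr rfl ?_
  intro Q hQ
  have hQpart : IsPartitionOf (Finset.univ : Finset ι) Q :=
    (Finset.mem_filter.mp (Finset.mem_filter.mp hQ).1).2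
  have hsep : ¬ ∃ B ∈ Q, a ∈ B ∧ b ∈ B := (Finset.mem_filter.mp hQ).2
  exact inner_sum m a b hab hQpart hsep


/-- Abstract core of the reduction formula. -/
theorem core (m : Finset ι → ℝ) (a b : ι) (hab : a ≠ b)
    (hE : (({a, b} : Finset ι)ᶜ).Nonempty)
    (hm0 : m ∅ = 1)
    (hm : ∀ B : Finset ι, a ∉ B → b ∉ B → m (insert a (insert b B)) = m B) :
    (∑ P ∈ Finset.univ.filter (IsPartitionOf (Finset.univ : Finset ι)),
        cc P.card * ∏ B ∈ P, m B)
      = - ∑ A ∈ Finset.univ.powerset.filter (fun A : Finset ι => a ∈ A ∧ b ∉ A),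
          (∑ P ∈ Finset.univ.filter (IsPartitionOf A), cc P.card * ∏ B ∈ P, m B) *
          (∑ P ∈ Finset.univ.filter (IsPartitionOf Aᶜ), cc P.card * ∏ B ∈ P, m B) := by
  classical
  rw [← Finset.sum_filter_add_sum_filter_not
      (Finset.univ.filter (IsPartitionOf (Finset.univ : Finset ι)))
      (fun Q => ∃ B ∈ Q, a ∈ B ∧ b ∈ B),
    same_sum_zero m a b hab hE hm0 hm, zero_add, sep_sum m a b hab, neg_neg]

end UrsellAux

/-- Reduction formula for Ursell functions when two of the (±1-valued) arguments
coincide: `u_{2k} = -Σ_{1∈A, 2∉A} u_{|A|}(σ_{j_A}) u_{2k-|A|}(σ_{j_{A^c}})`. -/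
theorem ursell_reduction {Ω : Type*} [MeasurableSpace Ω]
    (μ : Measure Ω) [IsProbabilityMeasure μ] (k : ℕ) (hk : 2 ≤ k)
    (σ : Fin (2 * k) → Ω → ℝ) (hmeas : ∀ i, Measurable (σ i))
    (C : ℝ) (hbd : ∀ i ω, |σ i ω| ≤ C)
    (heq : σ ⟨0, by omega⟩ = σ ⟨1, by omega⟩)
    (hpm : ∀ ω, σ ⟨0, by omega⟩ ω = 1 ∨ σ ⟨0, by omega⟩ ω = -1) :
    ursellOn μ σ Finset.univ
      = -∑ A ∈ Finset.univ.powerset.filter (fun A : Finset (Fin (2 * k)) =>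
            (⟨0, by omega⟩ : Fin (2 * k)) ∈ A ∧ (⟨1, by omega⟩ : Fin (2 * k)) ∉ A),
          ursellOn μ σ A * ursellOn μ σ Aᶜ := by
  classical
  set a : Fin (2 * k) := ⟨0, by omega⟩
  set b : Fin (2 * k) := ⟨1, by omega⟩
  set m : Finset (Fin (2 * k)) → ℝ := fun B => ∫ ω, ∏ i ∈ B, σ i ω ∂μ with hmdef
  have hab : a ≠ b := by
    intro h
    have := congrArg Fin.val h
    simp [a, b] at this
  have hE : (({a, b} : Finset (Fin (2 * k)))ᶜ).Nonempty := by
    rw [← Finset.card_pos, Finset.card_compl]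
    have h2 : ({a, b} : Finset (Fin (2 * k))).card = 2 := by
      rw [Finset.card_insert_of_notMem (by simpa using hab), Finset.card_singleton]
    rw [h2, Fintype.card_fin]
    omega
  have hm0 : m ∅ = 1 := by
    simp [hmdef, measure_univ]
  have hm : ∀ B : Finset (Fin (2 * k)), a ∉ B → b ∉ B →
      m (insert a (insert b B)) = m B := by
    intro B ha hb
    have hptw : ∀ ω, ∏ i ∈ insert a (insert b B), σ i ω = ∏ i ∈ B, σ i ω := by
      intro ω
      have hanb : a ∉ insert b B := by
        simp only [Finset.mem_insert]
        rintro (h | h)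
        exacts [hab h, ha h]
      rw [Finset.prod_insert hanb, Finset.prod_insert hb, ← mul_assoc]
      have h1 : σ a ω * σ b ω = 1 := by
        rw [show σ b = σ a from heq.symm]
        rcases hpm ω with h | h <;> rw [show σ a ω = _ from h] <;> norm_num
      rw [h1, one_mul]
    exact integral_congr_ae (Filter.Eventually.of_forall fun ω => hptw ω)
  have hcore := UrsellAux.core m a b hab hE hm0 hm
  have hU : ∀ S : Finset (Fin (2 * k)), ursellOn μ σ S
      = ∑ P ∈ Finset.univ.filter (IsPartitionOf S), UrsellAux.cc P.card * ∏ B ∈ P, m B := by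
    intro S
    refine Finset.sum_congr rfl fun P _ => ?_
    rw [UrsellAux.cc]
  rw [hU Finset.univ, hcore]
  congr 1
end

section
/- Second Ursell function monotonicity (Griffiths-type): for the ferromagnetic Ising model on a finite graph with no external field, the two-point function u₂(σ_{j₁}, σ_{j₂}) = ⟨σ_{j₁}σ_{j₂}⟩ is non-decreasing in each coupling J_{u₀v₀}, i.e., ∂⟨σ_{j₁}σ_{j₂}⟩/∂J_{u₀v₀} = ⟨σ_{j₁}σ_{j₂}σ_{u₀}σ_{v₀}⟩ - ⟨σ_{j₁}σ_{j₂}⟩⟨σ_{u₀}σ_{v₀}⟩ ≥ 0. -/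
open scoped Classical BigOperators

def tweak {V : Type*} [DecidableEq V] (J : V → V → ℝ) (u₀ v₀ : V) (t : ℝ) :
    V → V → ℝ := fun u v =>
  if (u = u₀ ∧ v = v₀) ∨ (u = v₀ ∧ v = u₀) then t else J u v

noncomputable def isingEv {V : Type*} [Fintype V] [DecidableEq V]
    (K : V → V → ℝ) (f : (V → Bool) → ℝ) : ℝ :=
  (∑ σ : V → Bool, f σ * Real.exp ((1 / 2) * ∑ u, ∑ v, K u v * spin σ u * spin σ v)) /
    (∑ σ : V → Bool, Real.exp ((1 / 2) * ∑ u, ∑ v, K u v * spin σ u * spin σ v))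

/-!
Along `t ↦ tweak J u₀ v₀ t` the Boltzmann weight is `exp (t σ_{u₀}σ_{v₀} + B σ)`, so
differentiating the quotient `isingEv` gives the covariance of `σ_{j₁}σ_{j₂}` and `σ_{u₀}σ_{v₀}`.

Its nonnegativity is Griffiths' second inequality, via Ginibre's duplicate variables: writing the
covariance as a double sum over configurations `σ, τ` and substituting `τ = σ t` (pointwise
product of spins) turns it into `∑ₜ (1 - t_{u₀}t_{v₀}) ∑_σ σ_{j₁}σ_{j₂}σ_{u₀}σ_{v₀} w_t(σ)`, where
`w_t` is the Boltzmann weight of the ferromagnetic couplings `J u v (1 + t_u t_v)`. Each term is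
nonnegative by Griffiths' first inequality: a ferromagnetic weight `∏ (cosh + sinh · σ_u σ_v)` is a
nonnegative combination of parity functions `∏_{v ∈ m} σ_v`, and each parity has nonnegative sum
over all configurations.
-/

open Finset
open scoped NNReal

section Gibbs
variable {α : Type*} [Fintype α]

noncomputable def gibbsEv (H f : α → ℝ) : ℝ :=
  (∑ x, f x * Real.exp (H x)) / ∑ x, Real.exp (H x)

lemma sum_exp_pos [Nonempty α] (H : α → ℝ) : 0 < ∑ x, Real.exp (H x) :=
  sum_pos (fun _ _ => Real.exp_pos _) univ_nonempty

lemma hasDerivAt_gibbsEv_mul_add [Nonempty α] (a B f : α → ℝ) (t₀ : ℝ) :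
    HasDerivAt (fun t => gibbsEv (fun x => t * a x + B x) f)
      (gibbsEv (fun x => t₀ * a x + B x) (fun x => f x * a x) -
        gibbsEv (fun x => t₀ * a x + B x) f * gibbsEv (fun x => t₀ * a x + B x) a) t₀ := by
  have hexp : ∀ x, HasDerivAt (fun t => Real.exp (t * a x + B x))
      (Real.exp (t₀ * a x + B x) * a x) t₀ := fun x =>
    ((hasDerivAt_mul_const (a x)).add_const (B x)).exp
  have hnum := HasDerivAt.fun_sum (u := univ) fun x _ => (hexp x).const_mul (f x)
  have hden := HasDerivAt.fun_sum (u := univ) fun x _ => hexp x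
  have hZ := (sum_exp_pos fun x => t₀ * a x + B x).ne'
  refine (hnum.fun_div hden hZ).congr_deriv ?_
  simp only [gibbsEv, mul_assoc, mul_comm (a _)]
  field_simp

lemma gibbsEv_mul_sub_mul [Nonempty α] (H f g : α → ℝ) :
    gibbsEv H (fun x => f x * g x) - gibbsEv H f * gibbsEv H g =
      (∑ x, ∑ y, f x * (g x - g y) * (Real.exp (H x) * Real.exp (H y))) /
        (∑ x, Real.exp (H x)) ^ 2 := by
  have hZ := (sum_exp_pos H).ne'
  have hdouble : ∑ x, ∑ y, f x * (g x - g y) * (Real.exp (H x) * Real.exp (H y)) =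
      (∑ x, f x * g x * Real.exp (H x)) * ∑ y, Real.exp (H y) -
        (∑ x, f x * Real.exp (H x)) * ∑ y, g y * Real.exp (H y) := by
    simp only [sum_mul_sum, ← sum_sub_distrib]
    exact sum_congr rfl fun x _ => sum_congr rfl fun y _ => by ring
  rw [hdouble, gibbsEv, gibbsEv, gibbsEv]
  field_simp

end Gibbs

lemma spin_mul_self {V : Type*} (σ : V → Bool) (v : V) : spin σ v * spin σ v = 1 := by
  unfold spin; cases σ v <;> norm_num

lemma spin_mul_spin_le_one {V : Type*} (σ : V → Bool) (u v : V) : spin σ u * spin σ v ≤ 1 := by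
  unfold spin; cases σ u <;> cases σ v <;> norm_num

lemma neg_one_le_spin_mul_spin {V : Type*} (σ : V → Bool) (u v : V) :
    -1 ≤ spin σ u * spin σ v := by
  unfold spin; cases σ u <;> cases σ v <;> norm_num

def configMul {V : Type*} (σ τ : V → Bool) : V → Bool := fun v => σ v == τ v

lemma spin_configMul {V : Type*} (σ τ : V → Bool) (v : V) :
    spin (configMul σ τ) v = spin σ v * spin τ v := by
  unfold spin configMul; cases σ v <;> cases τ v <;> norm_num

lemma configMul_involutive {V : Type*} (σ : V → Bool) : Function.Involutive (configMul σ) := by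
  intro τ; funext v; unfold configMul; cases σ v <;> cases τ v <;> rfl

lemma exp_mul_spin_mul_spin {V : Type*} (c : ℝ) (σ : V → Bool) (u v : V) :
    Real.exp (c * (spin σ u * spin σ v)) =
      Real.cosh c + Real.sinh c * (spin σ u * spin σ v) := by
  unfold spin
  cases σ u <;> cases σ v <;> simp [Real.cosh_add_sinh, ← Real.cosh_sub_sinh, ← sub_eq_add_neg]

section Ising
variable {V : Type*} [Fintype V]

noncomputable def isingExponent (K : V → V → ℝ) (σ : V → Bool) : ℝ :=
  (1 / 2) * ∑ u, ∑ v, K u v * spin σ u * spin σ v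

lemma isingExponent_add_isingExponent_configMul (K : V → V → ℝ) (σ t : V → Bool) :
    isingExponent K σ + isingExponent K (configMul σ t) =
      isingExponent (fun u v => K u v * (1 + spin t u * spin t v)) σ := by
  simp only [isingExponent, spin_configMul, ← mul_add, ← sum_add_distrib]
  congr 1
  exact sum_congr rfl fun u _ => sum_congr rfl fun v _ => by ring

lemma isingExponent_tweak [DecidableEq V] (J : V → V → ℝ) {u₀ v₀ : V} (hne : u₀ ≠ v₀) (t : ℝ)
    (σ : V → Bool) :
    isingExponent (tweak J u₀ v₀ t) σ =
      t * (spin σ u₀ * spin σ v₀) + isingExponent (tweak J u₀ v₀ 0) σ := by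
  have hpair : ∀ u v, tweak J u₀ v₀ t u v = tweak J u₀ v₀ 0 u v +
      if (u, v) ∈ ({(u₀, v₀), (v₀, u₀)} : Finset (V × V)) then t else 0 := by
    intro u v
    simp only [tweak, mem_insert, mem_singleton, Prod.mk.injEq]
    split_ifs <;> simp
  simp only [isingExponent, hpair, add_mul, sum_add_distrib, mul_add]
  rw [add_comm]
  congr 1
  simp only [ite_mul, zero_mul, ← Fintype.sum_prod_type', sum_ite_mem, univ_inter]
  rw [sum_pair (by simpa [eq_comm] using hne)]
  ring

noncomputable def parity (m σ : V → Bool) : ℝ := ∏ v, if m v then spin σ v else 1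

lemma parity_mul (m m' σ : V → Bool) :
    parity m σ * parity m' σ = parity (fun v => xor (m v) (m' v)) σ := by
  rw [parity, parity, parity, ← prod_mul_distrib]
  refine prod_congr rfl fun v _ => ?_
  cases m v <;> cases m' v <;> simp [spin_mul_self]

end Ising

lemma tweak_self {V : Type*} [DecidableEq V] {J : V → V → ℝ} (hsym : ∀ u v, J u v = J v u)
    (u₀ v₀ : V) : tweak J u₀ v₀ (J u₀ v₀) = J := by
  funext u v
  unfold tweak
  split_ifs with h
  · rcases h with ⟨rfl, rfl⟩ | ⟨rfl, rfl⟩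
    · rfl
    · exact hsym v u
  · rfl

section Griffiths
variable {V : Type*} [Fintype V] [DecidableEq V]

lemma isingEv_eq_gibbsEv (K : V → V → ℝ) (f : (V → Bool) → ℝ) :
    isingEv K f = gibbsEv (isingExponent K) f := rfl

lemma sum_parity_nonneg (m : V → Bool) : 0 ≤ ∑ σ, parity m σ := by
  have hfactor := Fintype.prod_sum
    (fun v (b : Bool) => if m v then (if b then (1 : ℝ) else -1) else 1)
  simp only [parity, spin, ← hfactor]
  refine prod_nonneg fun v _ => ?_
  cases m v <;> simp

variable (V) in
/-- Since parities are closed under products, this is also their `ℝ≥0`-span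
(`Algebra.adjoin_eq_span`). -/
abbrev parityCone : Subalgebra ℝ≥0 ((V → Bool) → ℝ) := Algebra.adjoin ℝ≥0 (Set.range parity)

lemma sum_nonneg_of_mem_parityCone {f : (V → Bool) → ℝ} (hf : f ∈ parityCone V) :
    0 ≤ ∑ σ, f σ := by
  have hclosure : ∀ g ∈ Submonoid.closure (Set.range (parity (V := V))), ∃ m, g = parity m := by
    intro g hg
    induction hg using Submonoid.closure_induction with
    | mem g hg => exact hg.imp fun m hm => hm.symm
    | one => exact ⟨fun _ => false, funext fun σ => by simp [parity]⟩
    | mul g g' _ _ ih ih' =>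
      obtain ⟨⟨m, rfl⟩, ⟨m', rfl⟩⟩ := And.intro ih ih'
      exact ⟨_, funext fun σ => parity_mul m m' σ⟩
  rw [← Subalgebra.mem_toSubmodule, Algebra.adjoin_eq_span] at hf
  induction hf using Submodule.span_induction with
  | mem g hg =>
    obtain ⟨m, rfl⟩ := hclosure g hg
    exact sum_parity_nonneg m
  | zero => simp
  | add g g' _ _ ih ih' => simpa [sum_add_distrib] using add_nonneg ih ih'
  | smul c g _ ih => simpa [NNReal.smul_def, ← mul_sum] using mul_nonneg c.2 ih

lemma spin_mem_parityCone (i : V) : (fun σ => spin σ i) ∈ parityCone V := by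
  refine Algebra.subset_adjoin ⟨fun v => decide (v = i), funext fun σ => ?_⟩
  simp [parity]

lemma exp_mul_spin_mul_spin_mem_parityCone {c : ℝ} (hc : 0 ≤ c) (u v : V) :
    (fun σ => Real.exp (c * (spin σ u * spin σ v))) ∈ parityCone V := by
  have hsplit : (fun σ => Real.exp (c * (spin σ u * spin σ v))) =
      algebraMap ℝ≥0 _ ⟨Real.cosh c, (Real.cosh_pos c).le⟩ +
        (⟨Real.sinh c, Real.sinh_nonneg_iff.2 hc⟩ : ℝ≥0) •
          ((fun σ => spin σ u) * fun σ => spin σ v) := by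
    funext σ
    exact exp_mul_spin_mul_spin c σ u v
  rw [hsplit]
  exact add_mem (Subalgebra.algebraMap_mem _ _)
    (Subalgebra.smul_mem _ (mul_mem (spin_mem_parityCone u) (spin_mem_parityCone v)) _)

lemma exp_isingExponent_mem_parityCone {K : V → V → ℝ} (hK : ∀ u v, 0 ≤ K u v) :
    (fun σ => Real.exp (isingExponent K σ)) ∈ parityCone V := by
  have hfactor : (fun σ => Real.exp (isingExponent K σ)) =
      ∏ u, ∏ v, fun σ => Real.exp ((1 / 2 * K u v) * (spin σ u * spin σ v)) := by
    funext σ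
    simp only [isingExponent, Finset.prod_apply, mul_sum, Real.exp_sum, mul_assoc]
  rw [hfactor]
  exact Subalgebra.prod_mem _ fun u _ => Subalgebra.prod_mem _ fun v _ =>
    exp_mul_spin_mul_spin_mem_parityCone (by have := hK u v; positivity) u v

theorem griffiths_first {K : V → V → ℝ} (hK : ∀ u v, 0 ≤ K u v) {f : (V → Bool) → ℝ}
    (hf : f ∈ parityCone V) : 0 ≤ ∑ σ, f σ * Real.exp (isingExponent K σ) :=
  sum_nonneg_of_mem_parityCone (mul_mem hf (exp_isingExponent_mem_parityCone hK))

theorem griffiths_second {K : V → V → ℝ} (hK : ∀ u v, 0 ≤ K u v) {f g : (V → Bool) → ℝ}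
    (hfg : (fun σ => f σ * g σ) ∈ parityCone V)
    (hg_mul : ∀ σ τ, g (configMul σ τ) = g σ * g τ) (hg_le : ∀ σ, g σ ≤ 1) :
    0 ≤ gibbsEv (isingExponent K) (fun σ => f σ * g σ) -
      gibbsEv (isingExponent K) f * gibbsEv (isingExponent K) g := by
  rw [gibbsEv_mul_sub_mul]
  refine div_nonneg ?_ (sq_nonneg _)
  have hduplicate : ∀ σ, ∑ τ, f σ * (g σ - g τ) *
        (Real.exp (isingExponent K σ) * Real.exp (isingExponent K τ)) =
      ∑ t, (1 - g t) * (f σ * g σ *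
        Real.exp (isingExponent (fun u v => K u v * (1 + spin t u * spin t v)) σ)) := by
    intro σ
    -- substitute `τ = configMul σ t`
    refine (Fintype.sum_equiv ((configMul_involutive σ).toPerm _) _ _ fun t => ?_).symm
    rw [Function.Involutive.coe_toPerm, hg_mul, ← Real.exp_add,
      isingExponent_add_isingExponent_configMul]
    ring
  rw [sum_congr rfl fun σ _ => hduplicate σ, sum_comm]
  refine sum_nonneg fun t _ => ?_
  have hK_t : ∀ u v, 0 ≤ K u v * (1 + spin t u * spin t v) := fun u v =>
    mul_nonneg (hK u v) (neg_le_iff_add_nonneg'.1 (neg_one_le_spin_mul_spin t u v))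
  rw [← mul_sum]
  exact mul_nonneg (sub_nonneg.2 (hg_le t)) (griffiths_first hK_t hfg)

end Griffiths

/-- Griffiths-type monotonicity of the two-point function: its derivative in the
coupling `J_{u₀v₀}` equals `⟨σ_{j₁}σ_{j₂}σ_{u₀}σ_{v₀}⟩ - ⟨σ_{j₁}σ_{j₂}⟩⟨σ_{u₀}σ_{v₀}⟩`,
which is nonnegative. -/
theorem two_point_monotone {V : Type*} [Fintype V] [DecidableEq V]
    (J : V → V → ℝ) (hsym : ∀ u v, J u v = J v u) (hferro : ∀ u v, 0 ≤ J u v)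
    (u₀ v₀ : V) (hne : u₀ ≠ v₀) (j₁ j₂ : V) :
    deriv (fun t => isingEv (tweak J u₀ v₀ t) (fun σ => spin σ j₁ * spin σ j₂))
        (J u₀ v₀)
      = isingEv J (fun σ => spin σ j₁ * spin σ j₂ * spin σ u₀ * spin σ v₀) -
          isingEv J (fun σ => spin σ j₁ * spin σ j₂) *
            isingEv J (fun σ => spin σ u₀ * spin σ v₀) ∧
    0 ≤ isingEv J (fun σ => spin σ j₁ * spin σ j₂ * spin σ u₀ * spin σ v₀) -
          isingEv J (fun σ => spin σ j₁ * spin σ j₂) *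
            isingEv J (fun σ => spin σ u₀ * spin σ v₀) := by
  set f : (V → Bool) → ℝ := fun σ => spin σ j₁ * spin σ j₂
  set g : (V → Bool) → ℝ := fun σ => spin σ u₀ * spin σ v₀
  have hfg : (fun σ => spin σ j₁ * spin σ j₂ * spin σ u₀ * spin σ v₀) = fun σ => f σ * g σ :=
    funext fun σ => mul_assoc _ _ _
  obtain ⟨B, hB⟩ : ∃ B : (V → Bool) → ℝ,
      ∀ t, isingExponent (tweak J u₀ v₀ t) = fun σ => t * g σ + B σ :=
    ⟨_, fun t => funext (isingExponent_tweak J hne t)⟩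
  have hJ : isingExponent J = fun σ => J u₀ v₀ * g σ + B σ := by
    rw [← hB, tweak_self hsym]
  simp only [isingEv_eq_gibbsEv, hB, hfg]
  refine ⟨by rw [(hasDerivAt_gibbsEv_mul_add g B f (J u₀ v₀)).deriv, hJ], ?_⟩
  refine griffiths_second hferro ?_ (fun σ τ => ?_) (fun σ => spin_mul_spin_le_one σ u₀ v₀)
  · exact mul_mem (mul_mem (spin_mem_parityCone j₁) (spin_mem_parityCone j₂))
      (mul_mem (spin_mem_parityCone u₀) (spin_mem_parityCone v₀))
  · simp only [g, spin_configMul]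
    ring
end

section
/- Self-loop factorization: let 𝒢 = (V, ℰ) be a finite multigraph containing a self-loop e = vv, and let 𝒢̂ be the multigraph with the self-loop deleted. Then the number of (k+1)-tuples of edge-disjoint subgraphs partitioning ℰ satisfying the source/connectivity conditions of a 'partition of 𝒢' (as defined in the paper) equals (k+1) times the corresponding count for 𝒢̂, weighted by signs; i.e., R(𝒢) = (k+1) R(𝒢̂), where R(𝒢) := Σ_𝒯 (-1)^{n(𝒯)-1}(n(𝒯)-1)! over distinct partitions 𝒯 of 𝒢. -/
open scoped Classical BigOperators symmDiff

/-- Number of endpoints of the edge `e` equal to `u` (a self-loop counts twice). -/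
def inc {V ε : Type*} [DecidableEq V] (ep : ε → V × V) (e : ε) (u : V) : ℕ :=
  (if (ep e).1 = u then 1 else 0) + (if (ep e).2 = u then 1 else 0)

/-- Boundary (odd-degree vertex set) of the `i`-th part of the edge-colouring `c`. -/
def partBnd {V ε : Type*} [Fintype V] [DecidableEq V] [Fintype ε] {k : ℕ}
    (ep : ε → V × V) (c : ε → Fin (k + 1)) (i : ℕ) : Finset V :=
  Finset.univ.filter fun u =>
    Odd (∑ e ∈ Finset.univ.filter (fun e => ((c e : ℕ) = i)), inc ep e u)

/-- Connectivity of `a` and `b` using only edges coloured `i` or `j`. -/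
def partConn {V ε : Type*} {k : ℕ} (ep : ε → V × V) (c : ε → Fin (k + 1))
    (i j : ℕ) (a b : V) : Prop :=
  Relation.ReflTransGen
    (fun x y => ∃ e, ((c e : ℕ) = i ∨ (c e : ℕ) = j) ∧
      (ep e = (x, y) ∨ ep e = (y, x))) a b

/-- An (ordered representative of a) partition `𝒯` of the multigraph with edges `ε`,
in the sense of the paper: the first `n-1` parts have nonempty even boundaries
forming, together with `P_n := ∂Γ_n Δ {u₀,v₀}`, a partition of the marked set `M`
into even blocks; the remaining parts are sourceless; and `u₀` is not connected to
`v₀` in the union of parts `n` and `n+1`. -/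
def Admissible {V ε : Type*} [Fintype V] [DecidableEq V] [Fintype ε] {k : ℕ}
    (ep : ε → V × V) (u₀ v₀ : V) (M : Finset V) (n : ℕ) (c : ε → Fin (k + 1)) : Prop :=
  1 ≤ n ∧ n ≤ k ∧
  (∀ i : ℕ, i < n - 1 → (partBnd ep c i).Nonempty ∧ Even (partBnd ep c i).card) ∧
  (∀ i : ℕ, n ≤ i → partBnd ep c i = ∅) ∧
  (partBnd ep c (n - 1) ∆ {u₀, v₀}).Nonempty ∧
  Even (partBnd ep c (n - 1) ∆ {u₀, v₀}).card ∧
  (∀ i < n - 1, ∀ i' < n - 1, i ≠ i' → Disjoint (partBnd ep c i) (partBnd ep c i')) ∧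
  (∀ i < n - 1, Disjoint (partBnd ep c i) (partBnd ep c (n - 1) ∆ {u₀, v₀})) ∧
  ((Finset.range (n - 1)).biUnion (partBnd ep c) ∪ (partBnd ep c (n - 1) ∆ {u₀, v₀}) = M) ∧
  ¬ partConn ep c (n - 1) n u₀ v₀

/-- `R(𝒢) = Σ_𝒯 (-1)^{n(𝒯)-1}(n(𝒯)-1)!`, written as a sum over ordered
representatives (each distinct `𝒯` has exactly `(n(𝒯)-1)!` ordered representatives,
so each contributes `(-1)^{n(𝒯)-1}(n(𝒯)-1)!`). -/
noncomputable def Rgraph {V ε : Type*} [Fintype V] [DecidableEq V] [Fintype ε]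
    [DecidableEq ε] (ep : ε → V × V) (k : ℕ) (u₀ v₀ : V) (M : Finset V) : ℝ :=
  ∑ n ∈ Finset.Icc 1 k, ∑ c : ε → Fin (k + 1),
    if Admissible ep u₀ v₀ M n c then (-1 : ℝ) ^ (n - 1) else 0

/-!
A self-loop adds 2 to the degree of its vertex and never joins two distinct vertices, so
neither the source sets nor the connectivity condition see it: a colouring of `𝒢` is
admissible iff its restriction to `𝒢̂` is. Hence each admissible colouring of `𝒢̂` extends
in exactly `k + 1` ways, one for each colour of the loop.
-/

section SelfLoop

variable {V ε : Type*} {k : ℕ} (ep : ε → V × V) {e₀ : ε} {x : V}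

lemma even_inc_of_loop [DecidableEq V] (hloop : ep e₀ = (x, x)) (u : V) :
    Even (inc ep e₀ u) := by
  simp only [inc, hloop]
  split_ifs <;> decide

lemma partBnd_subtype_ne_of_loop [Fintype V] [DecidableEq V] [Fintype ε] [DecidableEq ε]
    (hloop : ep e₀ = (x, x)) (c : ε → Fin (k + 1)) :
    partBnd (fun e : {e // e ≠ e₀} => ep e) (fun e => c e) = partBnd ep c := by
  ext i u
  simp only [partBnd, Finset.mem_filter, Finset.mem_univ, true_and, Finset.sum_filter]
  rw [Fintype.sum_eq_add_sum_subtype_ne _ e₀, Nat.odd_add']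
  have : Even (if (c e₀ : ℕ) = i then inc ep e₀ u else 0) := by
    split_ifs
    exacts [even_inc_of_loop ep hloop u, .zero]
  simp only [this, iff_true]
  rfl

lemma partConn_subtype_ne_of_loop (hloop : ep e₀ = (x, x)) (c : ε → Fin (k + 1))
    (i j : ℕ) (a b : V) :
    partConn (fun e : {e // e ≠ e₀} => ep e) (fun e => c e) i j a b ↔ partConn ep c i j a b := by
  unfold partConn
  refine ⟨Relation.ReflTransGen.mono (fun _ _ ⟨e, hc, hpq⟩ => ⟨e.1, hc, hpq⟩) a b, fun h => ?_⟩
  induction h with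
  | refl => exact .refl
  | @tail p q _ step ih =>
    obtain ⟨e, hc, hpq⟩ := step
    by_cases he : e = e₀
    · subst he
      rw [hloop, Prod.mk.injEq, Prod.mk.injEq] at hpq
      obtain ⟨rfl, rfl⟩ | ⟨rfl, rfl⟩ := hpq <;> exact ih
    · exact ih.tail ⟨⟨e, he⟩, hc, hpq⟩

lemma admissible_subtype_ne_of_loop [Fintype V] [DecidableEq V] [Fintype ε] [DecidableEq ε]
    (hloop : ep e₀ = (x, x)) (u₀ v₀ : V) (M : Finset V) (n : ℕ) (c : ε → Fin (k + 1)) :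
    Admissible (fun e : {e // e ≠ e₀} => ep e) u₀ v₀ M n (fun e => c e)
      ↔ Admissible ep u₀ v₀ M n c := by
  unfold Admissible
  rw [partBnd_subtype_ne_of_loop ep hloop, partConn_subtype_ne_of_loop ep hloop]

end SelfLoop

lemma Fintype.sum_comp_restrict_subtype_ne {ι α M : Type*} [Fintype ι] [DecidableEq ι]
    [Fintype α] [AddCommMonoid M] (i₀ : ι) (f : ({i // i ≠ i₀} → α) → M) :
    ∑ c : ι → α, f (fun i => c i) = Fintype.card α • ∑ g, f g := by
  have restrict_symm (a : α) (g : {i // i ≠ i₀} → α) :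
      (fun i : {i // i ≠ i₀} => (Equiv.funSplitAt i₀ α).symm (a, g) i) = g := by
    funext i
    simp [Equiv.funSplitAt, Equiv.piSplitAt, i.2]
  rw [← (Equiv.funSplitAt i₀ α).symm.sum_comp, Fintype.sum_prod_type]
  simp only [restrict_symm, Finset.sum_const, Finset.card_univ]

theorem selfloop_factorization_general {V ε : Type*} [Fintype V] [DecidableEq V]
    [Fintype ε] [DecidableEq ε] (ep : ε → V × V) (k : ℕ)
    (j : Fin (2 * k) → V) (u₀ v₀ : V)
    (e₀ : ε) (x : V) (hloop : ep e₀ = (x, x)) :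
    Rgraph ep k u₀ v₀ (Finset.univ.image j)
      = (k + 1) * Rgraph (fun e : {e : ε // e ≠ e₀} => ep e.1) k u₀ v₀
          (Finset.univ.image j) := by
  unfold Rgraph
  rw [Finset.mul_sum]
  refine Finset.sum_congr rfl fun n _ => ?_
  simp only [← admissible_subtype_ne_of_loop ep hloop]
  rw [Fintype.sum_comp_restrict_subtype_ne e₀ fun c =>
    if Admissible _ u₀ v₀ _ n c then (-1 : ℝ) ^ (n - 1) else 0, Fintype.card_fin, nsmul_eq_mul]
  push_cast
  ring

/-- Self-loop factorization: deleting a self-loop `e₀` divides `R` by `k+1`: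
`R(𝒢) = (k+1) R(𝒢̂)`. -/
theorem selfloop_factorization {V ε : Type*} [Fintype V] [DecidableEq V]
    [Fintype ε] [DecidableEq ε] (ep : ε → V × V) (k : ℕ) (hk : 1 ≤ k)
    (j : Fin (2 * k) → V) (hj : Function.Injective j) (u₀ v₀ : V)
    (e₀ : ε) (x : V) (hloop : ep e₀ = (x, x))
    (hbnd : (Finset.univ.filter fun u => Odd (∑ e, inc ep e u))
      = (Finset.univ.image j) ∆ {u₀, v₀}) :
    Rgraph ep k u₀ v₀ (Finset.univ.image j)
      = (k + 1) * Rgraph (fun e : {e : ε // e ≠ e₀} => ep e.1) k u₀ v₀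
          (Finset.univ.image j) :=
  selfloop_factorization_general ep k j u₀ v₀ e₀ x hloop
end

section
/- Coupling substitution preserving correlations: let G=(V,E) contain an edge u₀v₀ with coupling J_{u₀v₀} = β ≥ 0. Form Ĝ by deleting the edge u₀v₀, adding a new vertex w, and adding edges u₀w and v₀w each with coupling β̂ ≥ 0 chosen so that cosh(2β̂) = exp(2β), keeping all other couplings the same. Then for every A ⊆ V, the Ising correlations agree: ⟨σ_A⟩_G = ⟨σ_A⟩_{Ĝ}. -/
open scoped Classical BigOperators

/-- Couplings of the modified graph `Ĝ`: the edge `u₀v₀` is deleted and replaced by a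
path `u₀ — w — v₀` through a new vertex `w`, with coupling `β̂` on both new edges. -/
def hatCoupling {V : Type*} [DecidableEq V] (J : V → V → ℝ) (u₀ v₀ : V) (βh : ℝ) :
    V ⊕ Unit → V ⊕ Unit → ℝ := fun x y =>
  match x, y with
  | Sum.inl u, Sum.inl v =>
      if (u = u₀ ∧ v = v₀) ∨ (u = v₀ ∧ v = u₀) then 0 else J u v
  | Sum.inl u, Sum.inr _ => if u = u₀ ∨ u = v₀ then βh else 0
  | Sum.inr _, Sum.inl v => if v = u₀ ∨ v = v₀ then βh else 0
  | Sum.inr _, Sum.inr _ => 0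

lemma sum_pair_ite {V : Type*} [Fintype V] [DecidableEq V] (u₀ v₀ : V) (hne : u₀ ≠ v₀)
    (f : V → ℝ) :
    ∑ u, (if u = u₀ ∨ u = v₀ then f u else 0) = f u₀ + f v₀ := by
  have h : ∀ u : V, (if u = u₀ ∨ u = v₀ then f u else 0)
      = (if u ∈ ({u₀, v₀} : Finset V) then f u else 0) := by
    intro u; simp [Finset.mem_insert]
  rw [Finset.sum_congr rfl (fun u _ => h u), Finset.sum_ite_mem, Finset.univ_inter,
    Finset.sum_pair hne]

lemma sum_pair_diag {V : Type*} [Fintype V] [DecidableEq V] (u₀ v₀ : V) (hne : u₀ ≠ v₀)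
    (g : V → V → ℝ) :
    ∑ u, ∑ v, (if (u = u₀ ∧ v = v₀) ∨ (u = v₀ ∧ v = u₀) then g u v else 0)
      = g u₀ v₀ + g v₀ u₀ := by
  have h : ∀ u, ∑ v, (if (u = u₀ ∧ v = v₀) ∨ (u = v₀ ∧ v = u₀) then g u v else 0)
      = (if u = u₀ then g u v₀ else 0) + (if u = v₀ then g u u₀ else 0) := by
    intro u
    by_cases h1 : u = u₀
    · subst h1
      simp [hne, Finset.sum_ite_eq']
    · by_cases h2 : u = v₀
      · subst h2
        simp [h1, Ne.symm hne, Finset.sum_ite_eq']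
      · simp [h1, h2]
  rw [Finset.sum_congr rfl (fun u _ => h u), Finset.sum_add_distrib]
  simp [Finset.sum_ite_eq']

lemma bracket_lemma (β βh : ℝ) (hcosh : Real.cosh (2 * βh) = Real.exp (2 * β)) (x y : ℝ)
    (hx : x = 1 ∨ x = -1) (hy : y = 1 ∨ y = -1) :
    Real.exp (-(β * x * y) + βh * (x + y)) + Real.exp (-(β * x * y) - βh * (x + y))
      = 2 * Real.exp β := by
  have h2 : Real.exp (2 * βh) + Real.exp (-(2 * βh)) = 2 * Real.exp (2 * β) := by
    rw [← hcosh, Real.cosh_eq]; ring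
  have e1 : Real.exp (-β) * Real.exp (2 * β) = Real.exp β := by
    rw [← Real.exp_add]; congr 1; ring
  rcases hx with hx | hx <;> rcases hy with hy | hy <;> subst hx <;> subst hy
  · rw [show -(β * 1 * 1) + βh * (1 + 1) = -β + 2 * βh by ring,
      show -(β * 1 * 1) - βh * (1 + 1) = -β + -(2 * βh) by ring,
      Real.exp_add, Real.exp_add]
    linear_combination Real.exp (-β) * h2 + 2 * e1
  · rw [show -(β * 1 * -1) + βh * (1 + -1) = β by ring,
      show -(β * 1 * -1) - βh * (1 + -1) = β by ring]; ring
  · rw [show -(β * -1 * 1) + βh * (-1 + 1) = β by ring,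
      show -(β * -1 * 1) - βh * (-1 + 1) = β by ring]; ring
  · rw [show -(β * -1 * -1) + βh * (-1 + -1) = -β + -(2 * βh) by ring,
      show -(β * -1 * -1) - βh * (-1 + -1) = -β + 2 * βh by ring,
      Real.exp_add, Real.exp_add]
    linear_combination Real.exp (-β) * h2 + 2 * e1

lemma energy_decomp {V : Type*} [Fintype V] [DecidableEq V]
    (J : V → V → ℝ) (u₀ v₀ : V) (hne : u₀ ≠ v₀) (βh : ℝ)
    (τ : V → Bool) (b : Bool) :
    (∑ x, ∑ y, hatCoupling J u₀ v₀ βh x y * spin (Sum.elim τ (fun _ => b)) x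
        * spin (Sum.elim τ (fun _ => b)) y)
      = (∑ u, ∑ v, J u v * spin τ u * spin τ v)
        - (J u₀ v₀ + J v₀ u₀) * (spin τ u₀ * spin τ v₀)
        + 2 * βh * (if b then (1:ℝ) else -1) * (spin τ u₀ + spin τ v₀) := by
  set s : ℝ := if b then (1:ℝ) else -1 with hs
  set σ' : V ⊕ Unit → Bool := Sum.elim τ (fun _ => b) with hσ'
  have hsum : ∀ f : V ⊕ Unit → ℝ, ∑ x, f x = (∑ u, f (Sum.inl u)) + f (Sum.inr ()) := by
    intro f; rw [Fintype.sum_sum_type]; simp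
  rw [hsum]
  have hinner : ∀ u : V,
      ∑ y, hatCoupling J u₀ v₀ βh (Sum.inl u) y * spin σ' (Sum.inl u) * spin σ' y
      = (∑ v, (if (u = u₀ ∧ v = v₀) ∨ (u = v₀ ∧ v = u₀) then 0 else J u v)
            * spin τ u * spin τ v)
        + (if u = u₀ ∨ u = v₀ then βh else 0) * spin τ u * s := by
    intro u
    rw [hsum]
    rfl
  rw [Finset.sum_congr rfl (fun u _ => hinner u), Finset.sum_add_distrib]
  have hinner2 :
      ∑ y, hatCoupling J u₀ v₀ βh (Sum.inr ()) y * spin σ' (Sum.inr ()) * spin σ' y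
      = ∑ v, (if v = u₀ ∨ v = v₀ then βh else 0) * s * spin τ v := by
    rw [hsum]
    show (∑ v, (if v = u₀ ∨ v = v₀ then βh else 0) * s * spin τ v) + 0 * s * s = _
    ring
  rw [hinner2]
  have hA : (∑ u, ∑ v, (if (u = u₀ ∧ v = v₀) ∨ (u = v₀ ∧ v = u₀) then 0 else J u v)
        * spin τ u * spin τ v)
      = (∑ u, ∑ v, J u v * spin τ u * spin τ v)
        - (J u₀ v₀ * spin τ u₀ * spin τ v₀ + J v₀ u₀ * spin τ v₀ * spin τ u₀) := by
    have h : ∀ u v, (if (u = u₀ ∧ v = v₀) ∨ (u = v₀ ∧ v = u₀) then 0 else J u v)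
          * spin τ u * spin τ v
        = J u v * spin τ u * spin τ v
          - (if (u = u₀ ∧ v = v₀) ∨ (u = v₀ ∧ v = u₀) then J u v * spin τ u * spin τ v
             else 0) := by
      intro u v; split <;> ring
    simp_rw [h, Finset.sum_sub_distrib]
    rw [sum_pair_diag u₀ v₀ hne]
  have hB : (∑ u, (if u = u₀ ∨ u = v₀ then βh else 0) * spin τ u * s)
      = βh * spin τ u₀ * s + βh * spin τ v₀ * s := by
    have h : ∀ u, (if u = u₀ ∨ u = v₀ then βh else 0) * spin τ u * s
        = (if u = u₀ ∨ u = v₀ then βh * spin τ u * s else 0) := by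
      intro u; split <;> ring
    rw [Finset.sum_congr rfl (fun u _ => h u), sum_pair_ite u₀ v₀ hne]
  have hC : (∑ v, (if v = u₀ ∨ v = v₀ then βh else 0) * s * spin τ v)
      = βh * s * spin τ u₀ + βh * s * spin τ v₀ := by
    have h : ∀ v, (if v = u₀ ∨ v = v₀ then βh else 0) * s * spin τ v
        = (if v = u₀ ∨ v = v₀ then βh * s * spin τ v else 0) := by
      intro v; split <;> ring
    rw [Finset.sum_congr rfl (fun v _ => h v), sum_pair_ite u₀ v₀ hne]
  rw [hA, hB, hC]
  ring

lemma spin_pm {V : Type*} (τ : V → Bool) (u : V) : spin τ u = 1 ∨ spin τ u = -1 := by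
  unfold spin; split <;> simp

/-- Replacing the coupling `β` on `u₀v₀` by a two-step path through a new vertex with
couplings `β̂` satisfying `cosh(2β̂) = exp(2β)` preserves all correlations `⟨σ_A⟩`. -/
theorem coupling_substitution {V : Type*} [Fintype V] [DecidableEq V]
    (J : V → V → ℝ) (hsym : ∀ u v, J u v = J v u) (u₀ v₀ : V) (hne : u₀ ≠ v₀)
    (β βh : ℝ) (hβ : 0 ≤ β) (hβh : 0 ≤ βh) (hval : J u₀ v₀ = β)
    (hcosh : Real.cosh (2 * βh) = Real.exp (2 * β)) (A : Finset V) :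
    isingEv J (fun σ => ∏ u ∈ A, spin σ u)
      = isingEv (hatCoupling J u₀ v₀ βh)
          (fun σ => ∏ u ∈ A.image Sum.inl, spin σ u) := by
  classical
  have hequiv : ∀ F : (V ⊕ Unit → Bool) → ℝ,
      ∑ σ : V ⊕ Unit → Bool, F σ
        = ∑ τ : V → Bool, ∑ b : Bool, F (Sum.elim τ (fun _ => b)) := by
    intro F
    let e : (V ⊕ Unit → Bool) ≃ (V → Bool) × Bool :=
      (Equiv.sumArrowEquivProdArrow V Unit Bool).trans
        (Equiv.prodCongr (Equiv.refl _) (Equiv.funUnique Unit Bool))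
    have hsymm : ∀ (τ : V → Bool) (b : Bool),
        e.symm (τ, b) = Sum.elim τ (fun _ => b) := by
      intro τ b; funext x; cases x <;> rfl
    rw [← Equiv.sum_comp e.symm F, Fintype.sum_prod_type]
    exact Finset.sum_congr rfl fun τ _ =>
      Finset.sum_congr rfl fun b _ => by rw [hsymm]
  have hval' : J v₀ u₀ = β := by rw [← hsym]; exact hval
  have key : ∀ τ : V → Bool,
      ∑ b : Bool, Real.exp ((1 / 2) * ∑ x, ∑ y, hatCoupling J u₀ v₀ βh x y
          * spin (Sum.elim τ (fun _ => b)) x * spin (Sum.elim τ (fun _ => b)) y)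
      = (2 * Real.exp β)
          * Real.exp ((1 / 2) * ∑ u, ∑ v, J u v * spin τ u * spin τ v) := by
    intro τ
    rw [Fintype.sum_bool, energy_decomp J u₀ v₀ hne βh τ true,
      energy_decomp J u₀ v₀ hne βh τ false]
    set E := ∑ u, ∑ v, J u v * spin τ u * spin τ v with hE
    set x := spin τ u₀ with hxd
    set y := spin τ v₀ with hyd
    have h1 : (1 / 2 : ℝ) * (E - (J u₀ v₀ + J v₀ u₀) * (x * y)
          + 2 * βh * (if true then (1:ℝ) else -1) * (x + y))
        = (1 / 2) * E + (-(β * x * y) + βh * (x + y)) := by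
      rw [hval, hval']; norm_num; ring
    have h2 : (1 / 2 : ℝ) * (E - (J u₀ v₀ + J v₀ u₀) * (x * y)
          + 2 * βh * (if false then (1:ℝ) else -1) * (x + y))
        = (1 / 2) * E + (-(β * x * y) - βh * (x + y)) := by
      rw [hval, hval']; norm_num; ring
    rw [h1, h2, Real.exp_add ((1 / 2) * E), Real.exp_add ((1 / 2) * E), ← mul_add,
      bracket_lemma β βh hcosh x y (spin_pm τ u₀) (spin_pm τ v₀)]
    ring
  have hprod : ∀ (τ : V → Bool) (b : Bool),
      (∏ u ∈ A.image (Sum.inl : V → V ⊕ Unit),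
          spin (Sum.elim τ (fun _ => b) : V ⊕ Unit → Bool) u)
        = ∏ u ∈ A, spin τ u := by
    intro τ b
    rw [Finset.prod_image (fun a _ c _ h => Sum.inl.inj h)]
    rfl
  unfold isingEv
  rw [hequiv, hequiv]
  have hnum : (∑ τ : V → Bool, ∑ b : Bool,
        (∏ u ∈ A.image (Sum.inl : V → V ⊕ Unit), spin (Sum.elim τ (fun _ => b) : V ⊕ Unit → Bool) u)
          * Real.exp ((1 / 2) * ∑ u, ∑ v, hatCoupling J u₀ v₀ βh u v
              * spin (Sum.elim τ (fun _ => b)) u * spin (Sum.elim τ (fun _ => b)) v))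
      = (2 * Real.exp β) * ∑ τ : V → Bool, (∏ u ∈ A, spin τ u)
          * Real.exp ((1 / 2) * ∑ u, ∑ v, J u v * spin τ u * spin τ v) := by
    rw [Finset.mul_sum]
    refine Finset.sum_congr rfl fun τ _ => ?_
    calc ∑ b : Bool, (∏ u ∈ A.image (Sum.inl : V → V ⊕ Unit), spin (Sum.elim τ (fun _ => b) : V ⊕ Unit → Bool) u)
          * Real.exp ((1 / 2) * ∑ u, ∑ v, hatCoupling J u₀ v₀ βh u v
              * spin (Sum.elim τ (fun _ => b)) u * spin (Sum.elim τ (fun _ => b)) v)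
        = ∑ b : Bool, (∏ u ∈ A, spin τ u)
          * Real.exp ((1 / 2) * ∑ u, ∑ v, hatCoupling J u₀ v₀ βh u v
              * spin (Sum.elim τ (fun _ => b)) u * spin (Sum.elim τ (fun _ => b)) v) := by
          exact Finset.sum_congr rfl fun b _ => by rw [hprod]
      _ = (∏ u ∈ A, spin τ u) * ∑ b : Bool,
          Real.exp ((1 / 2) * ∑ u, ∑ v, hatCoupling J u₀ v₀ βh u v
              * spin (Sum.elim τ (fun _ => b)) u * spin (Sum.elim τ (fun _ => b)) v) := by
          rw [Finset.mul_sum]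
      _ = 2 * Real.exp β * ((∏ u ∈ A, spin τ u)
            * Real.exp ((1 / 2) * ∑ u, ∑ v, J u v * spin τ u * spin τ v)) := by
          rw [key τ]; ring
  have hden : (∑ τ : V → Bool, ∑ b : Bool,
        Real.exp ((1 / 2) * ∑ u, ∑ v, hatCoupling J u₀ v₀ βh u v
            * spin (Sum.elim τ (fun _ => b)) u * spin (Sum.elim τ (fun _ => b)) v))
      = (2 * Real.exp β) * ∑ τ : V → Bool,
          Real.exp ((1 / 2) * ∑ u, ∑ v, J u v * spin τ u * spin τ v) := by
    rw [Finset.mul_sum]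
    exact Finset.sum_congr rfl fun τ _ => key τ
  rw [hnum, hden,
    mul_div_mul_left _ _ (by positivity : (2 : ℝ) * Real.exp β ≠ 0)]
end
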